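/- Completeness of the base-extension semantics for ILL: if Γ ⊩ φ (i.e., Γ ⊩_B^{∅} φ for all bases B), then Γ ⊢ φ in N_ILL. -/

import Mathlib

abbrev Atom := ℕ
abbrev ASeq := Multiset Atom × Atom
abbrev Box := Multiset ASeq
abbrev ARule := Multiset Box × Box × Atom
abbrev Base := Set ARule

/-- An atom `d` is persistent in `B` if there is a rule `⟨∅, S, d⟩ ∈ B` with `S` nonempty. -/
def Persistent (B : Base) (d : Atom) : Prop :=
  ∃ S : Box, S ≠ 0 ∧ ((0 : Multiset Box), S, d) ∈ B

/-- Atomic derivability in a base. -/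
inductive Deriv (B : Base) : Multiset Atom → Atom → Prop
  | ref (p : Atom) : Deriv B {p} p
  | app (S : Box) (p : Atom)
      (bc : List (Box × Multiset Atom))
      (dc : List (Atom × Multiset Atom))
      (hrule : ((↑(bc.map Prod.fst) : Multiset Box), S, p) ∈ B)
      (hpers : ∀ x ∈ dc, Persistent B x.1)
      (hbox : ∀ x ∈ bc, ∀ s ∈ x.1, Deriv B (x.2 + s.1) s.2)
      (hd : ∀ x ∈ dc, Deriv B x.2 x.1)
      (hS : ∀ s ∈ S, Deriv B ((↑(dc.map Prod.fst) : Multiset Atom) + s.1) s.2) :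
      Deriv B ((bc.map Prod.snd).sum + (dc.map Prod.snd).sum) p

/-- Formulas of intuitionistic linear logic. -/
inductive Fml : Type
  | atom : Atom → Fml
  | top : Fml
  | zero : Fml
  | one : Fml
  | limp : Fml → Fml → Fml
  | tens : Fml → Fml → Fml
  | wth : Fml → Fml → Fml
  | plus : Fml → Fml → Fml
  | bang : Fml → Fml
deriving DecidableEq

/-- The degree of a formula. -/
def deg : Fml → ℕ
  | .atom _ => 1
  | .top => 2
  | .zero => 2
  | .one => 2
  | .limp φ ψ => deg φ + deg ψ + 1
  | .tens φ ψ => deg φ + deg ψ + 1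
  | .wth φ ψ => deg φ + deg ψ + 1
  | .plus φ ψ => deg φ + deg ψ + 1
  | .bang φ => deg φ + 1

theorem one_le_deg (φ : Fml) : 1 ≤ deg φ := by
  cases φ <;> simp [deg] <;> omega

mutual
  /-- Support `⊩_B^L φ` (empty left-hand side). -/
  def Supp : Base → Multiset Atom → Fml → Prop
    | B, L, .atom p => Deriv B L p
    | _, _, .top => True
    | B, L, .zero => ∀ (K : Multiset Atom) (p : Atom), Supp B (L + K) (.atom p)
    | B, L, .one => ∀ C : Base, B ⊆ C → ∀ (K : Multiset Atom) (p : Atom),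
        Supp C K (.atom p) → Supp C (L + K) (.atom p)
    | B, L, .limp φ ψ => SuppInf1 B L φ ψ
    | B, L, .tens φ ψ => ∀ C : Base, B ⊆ C → ∀ (K : Multiset Atom) (p : Atom),
        SuppInf2 C K φ ψ (.atom p) → Supp C (L + K) (.atom p)
    | B, L, .wth φ ψ => Supp B L φ ∧ Supp B L ψ
    | B, L, .plus φ ψ => ∀ C : Base, B ⊆ C → ∀ (K : Multiset Atom) (p : Atom),
        SuppInf1 C K φ (.atom p) → SuppInf1 C K ψ (.atom p) → Supp C (L + K) (.atom p)
    | B, L, .bang φ => ∀ C : Base, B ⊆ C → ∀ (K : Multiset Atom) (p : Atom),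
        (∀ D : Base, C ⊆ D → Supp D 0 φ → Supp D K (.atom p)) → Supp C (L + K) (.atom p)
  termination_by B L φ => 2 * deg φ
  decreasing_by
    all_goals
      try simp only [deg]
      try have h1 := one_le_deg φ
      try have h2 := one_le_deg ψ
      try have h3 := one_le_deg χ
      try have h4 := one_le_deg α
      try have h5 := one_le_deg β
      omega

  /-- The (Inf) clause for a singleton context `{φ} ⊩_B^L χ`. -/
  def SuppInf1 : Base → Multiset Atom → Fml → Fml → Prop
    | B, L, .bang α, χ => ∀ C : Base, B ⊆ C → Supp C 0 α → Supp C L χ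
    | B, L, φ, χ => ∀ C : Base, B ⊆ C → ∀ K : Multiset Atom,
        Supp C K φ → Supp C (L + K) χ
  termination_by B L φ χ => 2 * (deg φ + deg χ) - 1
  decreasing_by
    all_goals
      try simp only [deg]
      try have h1 := one_le_deg φ
      try have h2 := one_le_deg ψ
      try have h3 := one_le_deg χ
      try have h4 := one_le_deg α
      try have h5 := one_le_deg β
      omega

  /-- The (Inf) clause for a two-element context `{φ, ψ} ⊩_B^L χ`. -/
  def SuppInf2 : Base → Multiset Atom → Fml → Fml → Fml → Prop
    | B, L, .bang α, .bang β, χ => ∀ C : Base, B ⊆ C →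
        Supp C 0 α → Supp C 0 β → Supp C L χ
    | B, L, .bang α, ψ, χ => ∀ C : Base, B ⊆ C → ∀ K : Multiset Atom,
        Supp C 0 α → Supp C K ψ → Supp C (L + K) χ
    | B, L, φ, .bang β, χ => ∀ C : Base, B ⊆ C → ∀ K : Multiset Atom,
        Supp C 0 β → Supp C K φ → Supp C (L + K) χ
    | B, L, φ, ψ, χ => ∀ C : Base, B ⊆ C → ∀ K₁ K₂ : Multiset Atom,
        Supp C K₁ φ → Supp C K₂ ψ → Supp C (L + K₁ + K₂) χ
  termination_by B L φ ψ χ => 2 * (deg φ + deg ψ + deg χ) - 1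
  decreasing_by
    all_goals
      try simp only [deg]
      try have h1 := one_le_deg φ
      try have h2 := one_le_deg ψ
      try have h3 := one_le_deg χ
      try have h4 := one_le_deg α
      try have h5 := one_le_deg β
      omega
end

/-- Is the formula a `!`-formula? -/
def isBang : Fml → Bool
  | .bang _ => true
  | _ => false

/-- Strip a top-level `!`. -/
def unbang : Fml → Fml
  | .bang φ => φ
  | φ => φ

/-- Support for a multiset of formulas: the `(⊎)` clause. -/
def SuppMS (B : Base) (L : Multiset Atom) (Γ : Multiset Fml) : Prop :=
  ∃ l : List (Fml × Multiset Atom), (↑(l.map Prod.fst) : Multiset Fml) = Γ ∧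
    (l.map Prod.snd).sum = L ∧ ∀ x ∈ l, Supp B x.2 x.1

/-- The official (Inf) clause: `Γ ⊩_B^L φ`, where `Γ = !Δ ⊎ Θ`. -/
def SuppSeq (B : Base) (L : Multiset Atom) (Γ : Multiset Fml) (φ : Fml) : Prop :=
  ∀ C : Base, B ⊆ C → ∀ K : Multiset Atom,
    SuppMS C 0 ((Γ.filter (fun ψ => isBang ψ = true)).map unbang) →
    SuppMS C K (Γ.filter (fun ψ => isBang ψ = false)) →
    Supp C (L + K) φ

/-- Validity of a sequent `(Γ : φ)`. -/
def Valid (Γ : Multiset Fml) (φ : Fml) : Prop :=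
  ∀ B : Base, SuppSeq B 0 Γ φ
/-- The natural deduction system N_ILL. -/
inductive NDeriv : Multiset Fml → Fml → Prop
  | ax (φ : Fml) : NDeriv {φ} φ
  | limpI {Γ : Multiset Fml} {φ ψ : Fml} :
      NDeriv (Γ + {φ}) ψ → NDeriv Γ (.limp φ ψ)
  | limpE {Γ Δ : Multiset Fml} {φ ψ : Fml} :
      NDeriv Γ (.limp φ ψ) → NDeriv Δ φ → NDeriv (Γ + Δ) ψ
  | tensI {Γ Δ : Multiset Fml} {φ ψ : Fml} :
      NDeriv Γ φ → NDeriv Δ ψ → NDeriv (Γ + Δ) (.tens φ ψ)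
  | tensE {Γ Δ : Multiset Fml} {φ ψ χ : Fml} :
      NDeriv Γ (.tens φ ψ) → NDeriv (Δ + {φ, ψ}) χ → NDeriv (Γ + Δ) χ
  | oneI : NDeriv 0 .one
  | oneE {Γ Δ : Multiset Fml} {φ : Fml} :
      NDeriv Γ .one → NDeriv Δ φ → NDeriv (Γ + Δ) φ
  | wthI {Γ : Multiset Fml} {φ ψ : Fml} :
      NDeriv Γ φ → NDeriv Γ ψ → NDeriv Γ (.wth φ ψ)
  | wthE1 {Γ : Multiset Fml} {φ ψ : Fml} : NDeriv Γ (.wth φ ψ) → NDeriv Γ φ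
  | wthE2 {Γ : Multiset Fml} {φ ψ : Fml} : NDeriv Γ (.wth φ ψ) → NDeriv Γ ψ
  | plusI1 {Γ : Multiset Fml} {φ ψ : Fml} : NDeriv Γ φ → NDeriv Γ (.plus φ ψ)
  | plusI2 {Γ : Multiset Fml} {φ ψ : Fml} : NDeriv Γ ψ → NDeriv Γ (.plus φ ψ)
  | plusE {Γ Δ : Multiset Fml} {φ ψ χ : Fml} :
      NDeriv Γ (.plus φ ψ) → NDeriv (Δ + {φ}) χ → NDeriv (Δ + {ψ}) χ →
      NDeriv (Γ + Δ) χ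
  | topI (l : List (Multiset Fml × Fml)) :
      (∀ x ∈ l, NDeriv x.1 x.2) → NDeriv (l.map Prod.fst).sum .top
  | zeroE {Δ : Multiset Fml} {χ : Fml} (l : List (Multiset Fml × Fml)) :
      (∀ x ∈ l, NDeriv x.1 x.2) → NDeriv Δ .zero →
      NDeriv ((l.map Prod.fst).sum + Δ) χ
  | prom {φ : Fml} (l : List (Multiset Fml × Fml)) :
      (∀ x ∈ l, NDeriv x.1 (.bang x.2)) →
      NDeriv (↑(l.map (fun x => Fml.bang x.2)) : Multiset Fml) φ →
      NDeriv (l.map Prod.fst).sum (.bang φ)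
  | der {Γ Δ : Multiset Fml} {φ ψ : Fml} :
      NDeriv Γ (.bang φ) → NDeriv (Δ + {φ}) ψ → NDeriv (Γ + Δ) ψ
  | wk {Γ Δ : Multiset Fml} {φ ψ : Fml} :
      NDeriv Γ (.bang φ) → NDeriv Δ ψ → NDeriv (Γ + Δ) ψ
  | ctr {Γ Δ : Multiset Fml} {φ ψ : Fml} :
      NDeriv Γ (.bang φ) → NDeriv (Δ + {.bang φ, .bang φ}) ψ → NDeriv (Γ + Δ) ψ


set_option maxHeartbeats 4000000

/-- Injective code of formulas. -/
def code : Fml → ℕ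
  | .atom a => Nat.pair 0 a
  | .top => Nat.pair 1 0
  | .zero => Nat.pair 2 0
  | .one => Nat.pair 3 0
  | .limp φ ψ => Nat.pair 4 (Nat.pair (code φ) (code ψ))
  | .tens φ ψ => Nat.pair 5 (Nat.pair (code φ) (code ψ))
  | .wth φ ψ => Nat.pair 6 (Nat.pair (code φ) (code ψ))
  | .plus φ ψ => Nat.pair 7 (Nat.pair (code φ) (code ψ))
  | .bang φ => Nat.pair 8 (code φ)

theorem code_inj : ∀ φ ψ : Fml, code φ = code ψ → φ = ψ := by
  intro φ
  induction φ with
  | atom a => intro ψ h; cases ψ <;> simp [code, Nat.pair_eq_pair] at h ⊢; exact h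
  | top => intro ψ h; cases ψ <;> simp [code, Nat.pair_eq_pair] at h ⊢
  | zero => intro ψ h; cases ψ <;> simp [code, Nat.pair_eq_pair] at h ⊢
  | one => intro ψ h; cases ψ <;> simp [code, Nat.pair_eq_pair] at h ⊢
  | limp φ₁ φ₂ ih1 ih2 =>
      intro ψ h; cases ψ <;> simp [code, Nat.pair_eq_pair] at h ⊢
      exact ⟨ih1 _ h.1, ih2 _ h.2⟩
  | tens φ₁ φ₂ ih1 ih2 =>
      intro ψ h; cases ψ <;> simp [code, Nat.pair_eq_pair] at h ⊢
      exact ⟨ih1 _ h.1, ih2 _ h.2⟩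
  | wth φ₁ φ₂ ih1 ih2 =>
      intro ψ h; cases ψ <;> simp [code, Nat.pair_eq_pair] at h ⊢
      exact ⟨ih1 _ h.1, ih2 _ h.2⟩
  | plus φ₁ φ₂ ih1 ih2 =>
      intro ψ h; cases ψ <;> simp [code, Nat.pair_eq_pair] at h ⊢
      exact ⟨ih1 _ h.1, ih2 _ h.2⟩
  | bang φ₁ ih1 =>
      intro ψ h; cases ψ <;> simp [code, Nat.pair_eq_pair] at h ⊢
      exact ih1 _ h

/-- Flattening injection, with offset `k`. -/
def enc (k : ℕ) (φ : Fml) : Atom := k + code φ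

theorem enc_inj {k : ℕ} {φ ψ : Fml} (h : enc k φ = enc k ψ) : φ = ψ :=
  code_inj _ _ (by simpa [enc] using h)

theorem k_le_enc (k : ℕ) (φ : Fml) : k ≤ enc k φ := Nat.le_add_right _ _

open Classical in
/-- Reading atoms back as formulas. -/
noncomputable def dec (k : ℕ) (a : Atom) : Fml :=
  if h : ∃ ψ, enc k ψ = a then h.choose else .atom a

theorem dec_enc (k : ℕ) (φ : Fml) : dec k (enc k φ) = φ := by
  have h : ∃ ψ, enc k ψ = enc k φ := ⟨φ, rfl⟩
  simp only [dec]
  rw [dif_pos h]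
  exact enc_inj h.choose_spec

theorem dec_lt {k : ℕ} {a : Atom} (h : a < k) : dec k a = .atom a := by
  simp only [dec]
  rw [dif_neg]
  rintro ⟨ψ, hψ⟩
  have := k_le_enc k ψ
  rw [hψ] at this
  exact absurd h (not_lt.mpr this)

/-- Max atom occurring in a formula. -/
def maxAtom : Fml → ℕ
  | .atom a => a
  | .top => 0
  | .zero => 0
  | .one => 0
  | .limp φ ψ => max (maxAtom φ) (maxAtom ψ)
  | .tens φ ψ => max (maxAtom φ) (maxAtom ψ)
  | .wth φ ψ => max (maxAtom φ) (maxAtom ψ)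
  | .plus φ ψ => max (maxAtom φ) (maxAtom ψ)
  | .bang φ => maxAtom φ

/-- All atoms of `φ` are below `k`. -/
def Good (k : ℕ) (φ : Fml) : Prop := maxAtom φ < k

/-- A one-sequent box. -/
def bx (H : Multiset Atom) (q : Atom) : Box := {(H, q)}

/-- The rules of the simulation base (offset `k`). -/
inductive SimRule (k : ℕ) : ARule → Prop
  | a1 (q : Atom) (h : q < k) : SimRule k ({bx 0 q}, 0, enc k (.atom q))
  | a2 (q : Atom) (h : q < k) : SimRule k ({bx 0 (enc k (.atom q))}, 0, q)
  | t1 : SimRule k (0, 0, enc k .top)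
  | t2 (q : Atom) : SimRule k ({bx 0 q, bx 0 (enc k .top)}, 0, enc k .top)
  | z1 (p : Atom) : SimRule k ({bx 0 (enc k .zero)}, 0, p)
  | z2 (q : Atom) : SimRule k ({bx 0 (enc k .zero), bx 0 q}, 0, enc k .zero)
  | o1 : SimRule k (0, 0, enc k .one)
  | o2 (p : Atom) : SimRule k ({bx 0 (enc k .one), bx 0 p}, 0, p)
  | li (φ ψ : Fml) : SimRule k ({bx {enc k φ} (enc k ψ)}, 0, enc k (.limp φ ψ))
  | le (φ ψ : Fml) : SimRule k ({bx 0 (enc k (.limp φ ψ)), bx 0 (enc k φ)}, 0, enc k ψ)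
  | ti (φ ψ : Fml) : SimRule k ({bx 0 (enc k φ), bx 0 (enc k ψ)}, 0, enc k (.tens φ ψ))
  | te (φ ψ : Fml) (p : Atom) :
      SimRule k ({bx 0 (enc k (.tens φ ψ)), bx {enc k φ, enc k ψ} p}, 0, p)
  | wi (φ ψ : Fml) :
      SimRule k ({({(0, enc k φ), (0, enc k ψ)} : Box)}, 0, enc k (.wth φ ψ))
  | we1 (φ ψ : Fml) : SimRule k ({bx 0 (enc k (.wth φ ψ))}, 0, enc k φ)
  | we2 (φ ψ : Fml) : SimRule k ({bx 0 (enc k (.wth φ ψ))}, 0, enc k ψ)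
  | pi1 (φ ψ : Fml) : SimRule k ({bx 0 (enc k φ)}, 0, enc k (.plus φ ψ))
  | pi2 (φ ψ : Fml) : SimRule k ({bx 0 (enc k ψ)}, 0, enc k (.plus φ ψ))
  | pe (φ ψ : Fml) (p : Atom) :
      SimRule k ({bx 0 (enc k (.plus φ ψ)), ({({enc k φ}, p), ({enc k ψ}, p)} : Box)}, 0, p)
  | pr (α : Fml) : SimRule k (0, bx 0 (enc k α), enc k (.bang α))
  | dr (α : Fml) : SimRule k ({bx 0 (enc k (.bang α))}, 0, enc k α)
  | idr (p : Atom) : SimRule k ({bx 0 p}, 0, p)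
  | ct (α : Fml) (p : Atom) :
      SimRule k ({bx {enc k (.bang α), enc k (.bang α)} p, bx 0 (enc k (.bang α))}, 0, p)
  | cut (α : Fml) (p : Atom) :
      SimRule k ({bx 0 (enc k (.bang α)), bx {enc k (.bang α)} p}, 0, p)

def simBase (k : ℕ) : Base := {r | SimRule k r}

/-- The axioms for the `!`-part of the context. -/
def axBase (k : ℕ) (E : Multiset Fml) : Base :=
  {r | ∃ χ ∈ E, r = ((0 : Multiset Box), (0 : Box), enc k (unbang χ))}

/-- A single added axiom `⊢ a`. -/
def axr (a : Atom) : ARule := ((0 : Multiset Box), (0 : Box), a)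

/-- Monotonicity of Persistent. -/
theorem Persistent.mono {B C : Base} (h : B ⊆ C) {d : Atom} (hd : Persistent B d) :
    Persistent C d := by
  obtain ⟨S, hS, hr⟩ := hd
  exact ⟨S, hS, h hr⟩

/-- Monotonicity of atomic derivability. -/
theorem Deriv.mono {B C : Base} (h : B ⊆ C) {L : Multiset Atom} {p : Atom}
    (hd : Deriv B L p) : Deriv C L p := by
  induction hd with
  | ref p => exact .ref p
  | app S p bc dc hrule hpers hbox hd hS ih1 ih2 ih3 =>
      exact .app S p bc dc (h hrule) (fun x hx => (hpers x hx).mono h) ih1 ih2 ih3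

/-- Persistent atoms in extensions of the simulation base by S-free rules. -/
theorem persistent_char {k : ℕ} {E : Multiset Fml} {d : Atom}
    (hp : Persistent (simBase k ∪ axBase k E) d) : ∃ α : Fml, d = enc k (.bang α) := by
  obtain ⟨S, hS, hr⟩ := hp
  rcases hr with hr | hr
  · generalize hq : ((0 : Multiset Box), S, d) = r at hr
    cases hr <;> simp only [Prod.mk.injEq] at hq <;>
      first
        | exact ⟨_, hq.2.2⟩
        | exact absurd hq.2.1 hS
        | simp [bx] at hq
  · obtain ⟨χ, _, hχ⟩ := hr
    simp only [Prod.mk.injEq] at hχ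
    exact absurd hχ.2.1 hS

theorem list_map_eq_nil {A B : Type _} {l : List A} {f : A → B}
    (h : (↑(l.map f) : Multiset B) = 0) : l = [] := by
  cases l with
  | nil => rfl
  | cons a l => simp at h

theorem list_map_eq_singleton {A B : Type _} {l : List A} {f : A → B} {b : B}
    (h : (↑(l.map f) : Multiset B) = {b}) : ∃ x, l = [x] ∧ f x = b := by
  rw [Multiset.coe_eq_singleton] at h
  cases l with
  | nil => simp at h
  | cons a l =>
      simp only [List.map_cons, List.cons.injEq] at h
      obtain ⟨h1, h2⟩ := h
      exact ⟨a, by rw [List.map_eq_nil_iff] at h2; rw [h2], h1⟩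

theorem list_map_eq_pair {A B : Type _} {l : List A} {f : A → B} {b₁ b₂ : B}
    (h : (↑(l.map f) : Multiset B) = {b₁, b₂}) :
    ∃ x y, l = [x, y] ∧ ((f x = b₁ ∧ f y = b₂) ∨ (f x = b₂ ∧ f y = b₁)) := by
  have hlen : l.length = 2 := by
    have := congrArg Multiset.card h
    simpa using this
  match l, hlen with
  | [x, y], _ =>
      refine ⟨x, y, rfl, ?_⟩
      have h' : (f x) ::ₘ ({f y} : Multiset B) = b₁ ::ₘ {b₂} := by
        exact h
      rw [Multiset.cons_eq_cons] at h'
      rcases h' with ⟨h1, h2⟩ | ⟨_, cs, h1, h2⟩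
      · exact Or.inl ⟨h1, by simpa using h2⟩
      · have hcs : cs = 0 := by
          have h3 := congrArg Multiset.card h1
          simp only [Multiset.card_singleton, Multiset.card_cons] at h3
          have h4 : Multiset.card cs = 0 := by omega
          exact Multiset.card_eq_zero.mp h4
        subst hcs
        simp only [Multiset.cons_zero, Multiset.singleton_inj] at h1 h2
        exact Or.inr ⟨h2.symm, h1⟩

/-- Smart constructor: axiom rules. -/
theorem dapp0 {B : Base} {p : Atom} (h : ((0 : Multiset Box), (0 : Box), p) ∈ B) :
    Deriv B 0 p := by
  have := Deriv.app (B := B) 0 p [] [] (by simpa using h) (by simp) (by simp) (by simp)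
    (by simp)
  simpa using this

/-- Smart constructor: one-box rules. -/
theorem dapp1 {B : Base} {bx₁ : Box} {p : Atom} {M₁ : Multiset Atom}
    (h : (({bx₁} : Multiset Box), (0 : Box), p) ∈ B)
    (h₁ : ∀ s ∈ bx₁, Deriv B (M₁ + s.1) s.2) : Deriv B M₁ p := by
  have := Deriv.app (B := B) 0 p [(bx₁, M₁)] [] (by simpa using h) (by simp)
    (by simpa using h₁) (by simp) (by simp)
  simpa using this

/-- Smart constructor: two-box rules. -/
theorem dapp2 {B : Base} {bx₁ bx₂ : Box} {p : Atom} {M₁ M₂ : Multiset Atom}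
    (h : (({bx₁, bx₂} : Multiset Box), (0 : Box), p) ∈ B)
    (h₁ : ∀ s ∈ bx₁, Deriv B (M₁ + s.1) s.2)
    (h₂ : ∀ s ∈ bx₂, Deriv B (M₂ + s.1) s.2) : Deriv B (M₁ + M₂) p := by
  have := Deriv.app (B := B) 0 p [(bx₁, M₁), (bx₂, M₂)] [] (by exact h) (by simp)
    ?_ (by simp) (by simp)
  · simpa [add_assoc] using this
  · intro x hx
    simp only [List.mem_cons, List.mem_singleton, List.not_mem_nil, or_false] at hx
    rcases hx with rfl | rfl
    · simpa using h₁
    · simpa using h₂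

/-- Smart constructor: promotion-style rules (no boxes, an `S`-component). -/
theorem dappS {B : Base} {S : Box} {p : Atom} (h : ((0 : Multiset Box), S, p) ∈ B)
    (hS : ∀ s ∈ S, Deriv B s.1 s.2) : Deriv B 0 p := by
  have := Deriv.app (B := B) S p [] [] (by simpa using h) (by simp) (by simp) (by simp)
    (by simpa using hS)
  simpa using this

/-- Weakening by a persistent atom, via the reiteration rule. -/
theorem derivWk {k : ℕ} {B : Base} (hk : simBase k ⊆ B) {b : Atom}
    (hb : Persistent B b) {M : Multiset Atom} {q : Atom} (hq : Deriv B M q) :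
    Deriv B (M + {b}) q := by
  have hrule : (({bx 0 q} : Multiset Box), (0 : Box), q) ∈ B := hk (SimRule.idr q)
  have := Deriv.app (B := B) 0 q [(bx 0 q, M)] [(b, {b})] (by simpa using hrule)
    (by simpa using hb) (by simp [bx]; simpa using hq) (by simpa using Deriv.ref b)
    (by simp)
  simpa using this

theorem persistent_bang {k : ℕ} {B : Base} (hk : simBase k ⊆ B) (α : Fml) :
    Persistent B (enc k (.bang α)) :=
  ⟨bx 0 (enc k α), by simp [bx], hk (SimRule.pr α)⟩

theorem derivPr {k : ℕ} {B : Base} (hk : simBase k ⊆ B) {α : Fml}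
    (h : Deriv B 0 (enc k α)) : Deriv B 0 (enc k (.bang α)) := by
  refine dappS (hk (SimRule.pr α)) ?_
  intro s hs
  simp only [bx, Multiset.mem_singleton] at hs
  subst hs
  exact h

theorem derivDr {k : ℕ} {B : Base} (hk : simBase k ⊆ B) {α : Fml} {L : Multiset Atom}
    (h : Deriv B L (enc k (.bang α))) : Deriv B L (enc k α) := by
  refine dapp1 (hk (SimRule.dr α)) ?_
  intro s hs
  simp only [bx, Multiset.mem_singleton] at hs
  subst hs
  simpa using h

theorem derivCt {k : ℕ} {B : Base} (hk : simBase k ⊆ B) {α : Fml} {M : Multiset Atom}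
    {p : Atom} (h : Deriv B (M + {enc k (.bang α), enc k (.bang α)}) p) :
    Deriv B (M + {enc k (.bang α)}) p := by
  refine dapp2 (M₁ := M) (M₂ := {enc k (.bang α)}) (hk (SimRule.ct α p)) ?_ ?_
  · intro s hs
    simp only [bx, Multiset.mem_singleton] at hs
    subst hs
    exact h
  · intro s hs
    simp only [bx, Multiset.mem_singleton] at hs
    subst hs
    simpa using Deriv.ref _

theorem derivCut {k : ℕ} {B : Base} (hk : simBase k ⊆ B) {α : Fml} {L K : Multiset Atom}
    {p : Atom} (h1 : Deriv B L (enc k (.bang α)))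
    (h2 : Deriv B (K + {enc k (.bang α)}) p) : Deriv B (L + K) p := by
  refine dapp2 (M₁ := L) (M₂ := K) (hk (SimRule.cut α p)) ?_ ?_
  · intro s hs
    simp only [bx, Multiset.mem_singleton] at hs
    subst hs
    simpa using h1
  · intro s hs
    simp only [bx, Multiset.mem_singleton] at hs
    subst hs
    exact h2

theorem derivWkN {k : ℕ} {B : Base} (hk : simBase k ⊆ B) {b : Atom}
    (hb : Persistent B b) {M : Multiset Atom} {q : Atom} (hq : Deriv B M q) (n : ℕ) :
    Deriv B (M + Multiset.replicate n b) q := by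
  induction n with
  | zero => simpa using hq
  | succ n ih =>
      have : M + Multiset.replicate (n + 1) b = (M + Multiset.replicate n b) + {b} := by
        rw [Multiset.replicate_succ, ← Multiset.singleton_add]
        abel
      rw [this]
      exact derivWk hk hb ih

/-- Contract many copies of a persistent `!`-atom to one. -/
theorem derivNorm {k : ℕ} {B : Base} (hk : simBase k ⊆ B) {α : Fml} {M X : Multiset Atom}
    {p : Atom} (hX : ∀ a ∈ X, a = enc k (.bang α)) (h : Deriv B (M + X) p) :
    Deriv B (M + {enc k (.bang α)}) p := by
  have aux : ∀ X' : Multiset Atom, (∀ a ∈ X', a = enc k (.bang α)) →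
      ∀ M' : Multiset Atom, Deriv B (M' + {enc k (.bang α)} + X') p →
        Deriv B (M' + {enc k (.bang α)}) p := by
    intro X'
    induction X' using Multiset.induction with
    | empty => intro _ M' h'; simpa using h'
    | @cons a X' ih =>
        intro ha M' h'
        have hab : a = enc k (.bang α) := ha a (Multiset.mem_cons_self _ _)
        rw [hab] at h'
        have heq : M' + {enc k (Fml.bang α)} + (enc k (Fml.bang α) ::ₘ X')
            = ((M' + X') + {enc k (Fml.bang α), enc k (Fml.bang α)}) := by
          rw [← Multiset.singleton_add (enc k (Fml.bang α)) X']
          have h5 : ({enc k (Fml.bang α), enc k (Fml.bang α)} : Multiset Atom)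
              = {enc k (Fml.bang α)} + {enc k (Fml.bang α)} := rfl
          rw [h5]
          abel
        rw [heq] at h'
        have h'' := derivCt hk (α := α) h'
        have heq2 : M' + X' + {enc k (Fml.bang α)} = M' + {enc k (Fml.bang α)} + X' := by
          abel
        rw [heq2] at h''
        exact ih (fun x hx => ha x (Multiset.mem_cons_of_mem hx)) M' h''
  rcases Multiset.empty_or_exists_mem X with rfl | ⟨a, ha⟩
  · have := derivWk hk (persistent_bang hk α) h
    simpa using this
  · have hab : a = enc k (.bang α) := hX a ha
    obtain ⟨X', rfl⟩ := Multiset.exists_cons_of_mem ha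
    rw [hab] at h
    have heq : M + (enc k (Fml.bang α) ::ₘ X') = M + {enc k (Fml.bang α)} + X' := by
      rw [← Multiset.singleton_add (enc k (Fml.bang α)) X']
      abel
    rw [heq] at h
    exact aux X' (fun x hx => hX x (Multiset.mem_cons_of_mem hx)) M h

theorem persistent_union_ax {C : Base} {a d : Atom}
    (h : Persistent (C ∪ {axr a}) d) : Persistent C d := by
  obtain ⟨S, hS, hr⟩ := h
  rcases hr with hr | hr
  · exact ⟨S, hS, hr⟩
  · simp only [Set.mem_singleton_iff, axr, Prod.mk.injEq] at hr
    exact absurd hr.2.1 hS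

/-- Turn an all-`b` multiset into a replicate. -/
theorem allb_replicate {b : Atom} {X : Multiset Atom} (hX : ∀ a ∈ X, a = b) :
    X = Multiset.replicate (Multiset.card X) b :=
  Multiset.eq_replicate_card.mpr hX

/-- Uniformize the number of copies of a persistent atom across a box. -/
theorem derivUniform {k : ℕ} {B : Base} (hk : simBase k ⊆ B) (α : Fml)
    (T : Multiset ASeq) (M : Multiset Atom)
    (h : ∀ s ∈ T, ∃ X : Multiset Atom, (∀ a ∈ X, a = enc k (.bang α)) ∧
      Deriv B ((M + s.1) + X) s.2) :
    ∃ N : ℕ, ∀ s ∈ T, Deriv B ((M + Multiset.replicate N (enc k (.bang α))) + s.1) s.2 := by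
  induction T using Multiset.induction with
  | empty => exact ⟨0, by simp⟩
  | @cons s T ih =>
      obtain ⟨X, hX, hder⟩ := h s (Multiset.mem_cons_self _ _)
      obtain ⟨N, hN⟩ := ih (fun t ht => h t (Multiset.mem_cons_of_mem ht))
      set b := enc k (Fml.bang α)
      refine ⟨Multiset.card X + N, ?_⟩
      intro t ht
      rcases Multiset.mem_cons.mp ht with rfl | ht
      · rw [allb_replicate hX] at hder
        have h2 := derivWkN hk (persistent_bang hk α) hder N
        have heq : M + t.1 + Multiset.replicate (Multiset.card X) b + Multiset.replicate N b
            = (M + Multiset.replicate (Multiset.card X + N) b) + t.1 := by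
          rw [Multiset.replicate_add]
          abel
        rw [heq] at h2
        exact h2
      · have h2 := derivWkN hk (persistent_bang hk α) (hN t ht) (Multiset.card X)
        have heq : M + Multiset.replicate N b + t.1 + Multiset.replicate (Multiset.card X) b
            = (M + Multiset.replicate (Multiset.card X + N) b) + t.1 := by
          rw [Multiset.replicate_add]
          abel
        rw [heq] at h2
        exact h2

/-- Adjust the box components of an `app`. -/
theorem bcAdjust {k : ℕ} {B : Base} (hk : simBase k ⊆ B) (α : Fml) :
    ∀ bc : List (Box × Multiset Atom),
    (∀ x ∈ bc, ∀ s ∈ x.1, ∃ X : Multiset Atom, (∀ a ∈ X, a = enc k (.bang α)) ∧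
        Deriv B ((x.2 + s.1) + X) s.2) →
    ∃ bc' : List (Box × Multiset Atom), bc'.map Prod.fst = bc.map Prod.fst ∧
      (∃ X : Multiset Atom, (∀ a ∈ X, a = enc k (.bang α)) ∧
        (bc'.map Prod.snd).sum = (bc.map Prod.snd).sum + X) ∧
      (∀ x ∈ bc', ∀ s ∈ x.1, Deriv B (x.2 + s.1) s.2) := by
  intro bc
  induction bc with
  | nil => exact fun _ => ⟨[], rfl, ⟨0, by simp, by simp⟩, by simp⟩
  | cons x bc ih =>
      intro h
      obtain ⟨bc', hfst, ⟨X, hX, hsum⟩, hder⟩ := ih (fun y hy => h y (List.mem_cons_of_mem _ hy))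
      obtain ⟨N, hN⟩ := derivUniform hk α x.1 x.2 (h x (List.mem_cons_self))
      refine ⟨(x.1, x.2 + Multiset.replicate N (enc k (.bang α))) :: bc', ?_, ?_, ?_⟩
      · simp [hfst]
      · refine ⟨Multiset.replicate N (enc k (.bang α)) + X, ?_, ?_⟩
        · intro a ha
          rcases Multiset.mem_add.mp ha with ha | ha
          · exact Multiset.eq_of_mem_replicate ha
          · exact hX a ha
        · simp only [List.map_cons, List.sum_cons, hsum]
          abel
      · intro y hy
        rcases List.mem_cons.mp hy with rfl | hy
        · exact hN
        · exact hder y hy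

/-- Adjust the `dc` components of an `app`. -/
theorem dcAdjust {k : ℕ} {B : Base} (α : Fml) :
    ∀ dc : List (Atom × Multiset Atom),
    (∀ x ∈ dc, ∃ X : Multiset Atom, (∀ a ∈ X, a = enc k (.bang α)) ∧
        Deriv B (x.2 + X) x.1) →
    ∃ dc' : List (Atom × Multiset Atom), dc'.map Prod.fst = dc.map Prod.fst ∧
      (∃ X : Multiset Atom, (∀ a ∈ X, a = enc k (.bang α)) ∧
        (dc'.map Prod.snd).sum = (dc.map Prod.snd).sum + X) ∧
      (∀ x ∈ dc', Deriv B x.2 x.1) := by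
  intro dc
  induction dc with
  | nil => exact fun _ => ⟨[], rfl, ⟨0, by simp, by simp⟩, by simp⟩
  | cons x dc ih =>
      intro h
      obtain ⟨dc', hfst, ⟨X, hX, hsum⟩, hder⟩ := ih (fun y hy => h y (List.mem_cons_of_mem _ hy))
      obtain ⟨Y, hY, hdy⟩ := h x (List.mem_cons_self)
      refine ⟨(x.1, x.2 + Y) :: dc', ?_, ?_, ?_⟩
      · simp [hfst]
      · refine ⟨Y + X, ?_, ?_⟩
        · intro a ha
          rcases Multiset.mem_add.mp ha with ha | ha
          · exact hY a ha
          · exact hX a ha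
        · simp only [List.map_cons, List.sum_cons, hsum]
          abel
      · intro y hy
        rcases List.mem_cons.mp hy with rfl | hy
        · exact hdy
        · exact hder y hy

/-- Eliminating an added axiom `⊢ (enc k α)` in favour of the atom `enc k (!α)`. -/
theorem axElim {k : ℕ} {C : Base} (hk : simBase k ⊆ C) (α : Fml) {L : Multiset Atom}
    {p : Atom} (h : Deriv (C ∪ {axr (enc k α)}) L p) :
    ∃ X : Multiset Atom, (∀ a ∈ X, a = enc k (.bang α)) ∧ Deriv C (L + X) p := by
  induction h with
  | ref p => exact ⟨0, by simp, by simpa using Deriv.ref p⟩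
  | app S p bc dc hrule hpers hbox hd hS ihbox ihd ihS =>
      have hpers' : ∀ x ∈ dc, Persistent C x.1 := fun x hx => persistent_union_ax (hpers x hx)
      obtain ⟨bc', hbfst, ⟨Xb, hXb, hbsum⟩, hbox'⟩ := bcAdjust hk α bc ihbox
      obtain ⟨dc', hdfst, ⟨Xd, hXd, hdsum⟩, hd'⟩ := dcAdjust α dc ihd
      rcases hrule with hC | hax
      · -- rule is in C
        obtain ⟨N, hN⟩ := derivUniform hk α S (↑(dc.map Prod.fst)) ihS
        set b := enc k (Fml.bang α) with hbdef
        set dc'' := dc' ++ List.replicate N (b, ({b} : Multiset Atom)) with hdc''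
        have hfst'' : (↑(dc''.map Prod.fst) : Multiset Atom)
            = ↑(dc.map Prod.fst) + Multiset.replicate N b := by
          rw [hdc'']
          rw [List.map_append, ← Multiset.coe_add, hdfst]
          congr 1
          simp [List.map_replicate, Multiset.coe_replicate]
        have happ := Deriv.app (B := C) S p bc' dc'' ?_ ?_ ?_ ?_ ?_
        · refine ⟨Xb + Xd + Multiset.replicate N b, ?_, ?_⟩
          · intro a ha
            rcases Multiset.mem_add.mp ha with ha | ha
            · rcases Multiset.mem_add.mp ha with ha | ha
              · exact hXb a ha
              · exact hXd a ha
            · exact Multiset.eq_of_mem_replicate ha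
          · have hsnd'' : (dc''.map Prod.snd).sum = (dc.map Prod.snd).sum + Xd
                + Multiset.replicate N b := by
              rw [hdc'', List.map_append, List.sum_append, hdsum]
              have : ((List.replicate N (b, ({b} : Multiset Atom))).map Prod.snd).sum
                  = Multiset.replicate N b := by
                simp [List.map_replicate, List.sum_replicate, Multiset.nsmul_singleton]
              rw [this]
            rw [hbsum, hsnd''] at happ
            have heq : (bc.map Prod.snd).sum + Xb + ((dc.map Prod.snd).sum + Xd
                + Multiset.replicate N b)
                = (bc.map Prod.snd).sum + (dc.map Prod.snd).sum
                  + (Xb + Xd + Multiset.replicate N b) := by abel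
            rw [heq] at happ
            exact happ
        · rw [hbfst]; exact hC
        · intro x hx
          rw [hdc''] at hx
          rcases List.mem_append.mp hx with hx | hx
          · have hx1 : x.1 ∈ dc'.map Prod.fst := List.mem_map_of_mem hx
            rw [hdfst] at hx1
            obtain ⟨y, hy, hyx⟩ := List.mem_map.mp hx1
            rw [← hyx]
            exact hpers' y hy
          · have := List.eq_of_mem_replicate hx
            rw [this]
            exact persistent_bang hk α
        · exact hbox'
        · intro x hx
          rw [hdc''] at hx
          rcases List.mem_append.mp hx with hx | hx
          · exact hd' x hx
          · have := List.eq_of_mem_replicate hx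
            rw [this]
            exact Deriv.ref b
        · intro s hs
          rw [hfst'']
          have h2 := hN s hs
          have heq : (↑(dc.map Prod.fst) : Multiset Atom) + Multiset.replicate N b + s.1
              = ↑(dc.map Prod.fst) + Multiset.replicate N b + s.1 := rfl
          exact h2
      · -- rule is the added axiom
        simp only [Set.mem_singleton_iff, axr, Prod.mk.injEq] at hax
        obtain ⟨hbc0, hS0, hp⟩ := hax
        have hbc : bc = [] := list_map_eq_nil hbc0
        subst hbc hp
        set b := enc k (Fml.bang α) with hbdef
        have happ := Deriv.app (B := C) 0 (enc k α) [(bx 0 b, ({b} : Multiset Atom))] dc' ?_ ?_ ?_ ?_ ?_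
        · refine ⟨Xd + {b}, ?_, ?_⟩
          · intro a ha
            rcases Multiset.mem_add.mp ha with ha | ha
            · exact hXd a ha
            · rw [Multiset.mem_singleton.mp ha]
          · simp only [List.map_cons, List.map_nil, List.sum_cons, List.sum_nil] at happ
            rw [hdsum] at happ
            have heq : ({b} : Multiset Atom) + 0 + ((dc.map Prod.snd).sum + Xd)
                = 0 + (dc.map Prod.snd).sum + (Xd + {b}) := by abel
            rw [heq] at happ
            exact happ
        · simpa using hk (SimRule.dr α)
        · intro x hx
          have hx1 : x.1 ∈ dc'.map Prod.fst := List.mem_map_of_mem hx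
          rw [hdfst] at hx1
          obtain ⟨y, hy, hyx⟩ := List.mem_map.mp hx1
          rw [← hyx]
          exact hpers' y hy
        · intro x hx s hs
          simp only [List.mem_singleton] at hx
          subst hx
          simp only [bx, Multiset.mem_singleton] at hs
          subst hs
          simpa using Deriv.ref b
        · exact hd'
        · simp

theorem ndBangElim (δ : Fml) : NDeriv {Fml.bang δ} δ := by
  have h := NDeriv.der (Γ := {Fml.bang δ}) (Δ := 0) (φ := δ) (ψ := δ)
    (NDeriv.ax (Fml.bang δ)) (by simpa using NDeriv.ax δ)
  simpa using h

/-- Weakening by a multiset of `!`-formulas. -/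
theorem ndWkE {E : Multiset Fml} (hE : ∀ χ ∈ E, isBang χ = true) {M : Multiset Fml}
    {φ : Fml} (h : NDeriv M φ) : NDeriv (M + E) φ := by
  induction E using Multiset.induction with
  | empty => simpa using h
  | @cons χ E ih =>
      have hb := hE χ (Multiset.mem_cons_self _ _)
      obtain ⟨η, rfl⟩ : ∃ η, χ = Fml.bang η := by
        cases χ <;> simp_all [isBang]
      have ih' := ih (fun x hx => hE x (Multiset.mem_cons_of_mem hx))
      have h2 := NDeriv.wk (Γ := {Fml.bang η}) (Δ := M + E)
        (NDeriv.ax (Fml.bang η)) ih'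
      have heq : ({Fml.bang η} : Multiset Fml) + (M + E) = M + (Fml.bang η ::ₘ E) := by
        rw [← Multiset.singleton_add (Fml.bang η) E]
        abel
      rw [heq] at h2
      exact h2

/-- Normalizing any number of copies of formulas from `E` to exactly `E`. -/
theorem ndNormE {E : Multiset Fml} (hE : ∀ χ ∈ E, isBang χ = true) {X : Multiset Fml}
    (hX : ∀ χ ∈ X, χ ∈ E) {M : Multiset Fml} {φ : Fml} (h : NDeriv (M + X) φ) :
    NDeriv (M + E) φ := by
  induction X using Multiset.induction generalizing M with
  | empty => exact ndWkE hE (by simpa using h)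
  | @cons χ X ih =>
      have hχE : χ ∈ E := hX χ (Multiset.mem_cons_self _ _)
      have hb := hE χ hχE
      obtain ⟨η, hη⟩ : ∃ η, χ = Fml.bang η := by
        cases χ <;> simp_all [isBang]
      have h' : NDeriv ((M + {χ}) + X) φ := by
        have heq : M + (χ ::ₘ X) = (M + {χ}) + X := by
          rw [← Multiset.singleton_add χ X]
          abel
        rw [← heq]
        exact h
      have h2 := ih (fun x hx => hX x (Multiset.mem_cons_of_mem hx)) h'
      -- h2 : NDeriv (M + {χ} + E) φ; remove the extra χ by contraction
      obtain ⟨R, hR⟩ := Multiset.exists_cons_of_mem hχE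
      rw [hR] at h2 ⊢
      have h3 : NDeriv ((M + R) + {Fml.bang η, Fml.bang η}) φ := by
        have heq : M + {χ} + (χ ::ₘ R) = (M + R) + {χ, χ} := by
          rw [← Multiset.singleton_add χ R]
          have h5 : ({χ, χ} : Multiset Fml) = {χ} + {χ} := rfl
          rw [h5]
          abel
        rw [heq] at h2
        rw [← hη]
        exact h2
      have h4 := NDeriv.ctr (Γ := {Fml.bang η}) (Δ := M + R) (NDeriv.ax _) h3
      have heq : ({Fml.bang η} : Multiset Fml) + (M + R) = M + (χ ::ₘ R) := by
        rw [← Multiset.singleton_add χ R, hη]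
        abel
      rw [heq] at h4
      exact h4

/-- Fold the `dc`-components into an `NDeriv` via weakening. -/
theorem ndFoldDc {k : ℕ} {E : Multiset Fml} (hE : ∀ χ ∈ E, isBang χ = true) :
    ∀ dc : List (Atom × Multiset Atom),
    (∀ x ∈ dc, ∃ η, NDeriv (Multiset.map (dec k) x.2 + E) (Fml.bang η)) →
    ∀ {M : Multiset Fml} {φ : Fml}, NDeriv (M + E) φ →
      NDeriv ((M + Multiset.map (dec k) ((dc.map Prod.snd).sum)) + E) φ := by
  intro dc
  induction dc with
  | nil => intro _ M φ h; simpa using h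
  | cons x dc ih =>
      intro hdc M φ h
      obtain ⟨η, hη⟩ := hdc x (List.mem_cons_self)
      have h2 := ih (fun y hy => hdc y (List.mem_cons_of_mem _ hy)) h
      have h3 := NDeriv.wk (Γ := Multiset.map (dec k) x.2 + E) hη h2
      have heq : (Multiset.map (dec k) x.2 + E)
          + ((M + Multiset.map (dec k) ((dc.map Prod.snd).sum)) + E)
          = (M + Multiset.map (dec k) (((x :: dc).map Prod.snd).sum)) + (E + E) := by
        simp only [List.map_cons, List.sum_cons, Multiset.map_add]
        abel
      rw [heq] at h3
      exact ndNormE hE (fun χ hχ => by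
        rcases Multiset.mem_add.mp hχ with h' | h' <;> exact h') h3

section BoxHelpers

variable {P : Multiset Atom → ASeq → Prop}

theorem zeroBox {bc : List (Box × Multiset Atom)}
    (h1 : (↑(bc.map Prod.fst) : Multiset Box) = 0) : (bc.map Prod.snd).sum = 0 := by
  rw [list_map_eq_nil h1]
  rfl

theorem oneBox {bc : List (Box × Multiset Atom)} {B1 : Box}
    (h1 : (↑(bc.map Prod.fst) : Multiset Box) = {B1})
    (ih : ∀ x ∈ bc, ∀ s ∈ x.1, P x.2 s) :
    ∃ M1, (bc.map Prod.snd).sum = M1 ∧ (∀ s ∈ B1, P M1 s) := by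
  obtain ⟨x, rfl, hx1⟩ := list_map_eq_singleton h1
  exact ⟨x.2, by simp, fun s hs => ih x (by simp) s (by rw [hx1]; exact hs)⟩

theorem twoBox {bc : List (Box × Multiset Atom)} {B1 B2 : Box}
    (h1 : (↑(bc.map Prod.fst) : Multiset Box) = {B1, B2})
    (ih : ∀ x ∈ bc, ∀ s ∈ x.1, P x.2 s) :
    ∃ M1 M2, (bc.map Prod.snd).sum = M1 + M2 ∧
      (∀ s ∈ B1, P M1 s) ∧ (∀ s ∈ B2, P M2 s) := by
  obtain ⟨x, y, rfl, hor⟩ := list_map_eq_pair h1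
  rcases hor with ⟨hx1, hy1⟩ | ⟨hx1, hy1⟩
  · exact ⟨x.2, y.2, by simp, fun s hs => ih x (by simp) s (by rw [hx1]; exact hs),
      fun s hs => ih y (by simp) s (by rw [hy1]; exact hs)⟩
  · refine ⟨y.2, x.2, by simp; abel, fun s hs => ih y (by simp) s (by rw [hy1]; exact hs),
      fun s hs => ih x (by simp) s (by rw [hx1]; exact hs)⟩

theorem bxPrem {H : Multiset Atom} {q : Atom} {M : Multiset Atom}
    (h : ∀ s ∈ bx H q, P M s) : P M (H, q) := h (H, q) (by simp [bx])

end BoxHelpers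

theorem bang_of_isBang {χ : Fml} (h : isBang χ = true) : ∃ η, χ = Fml.bang η := by
  cases χ <;> simp_all [isBang]

theorem bang_unbang {χ : Fml} (h : isBang χ = true) : Fml.bang (unbang χ) = χ := by
  obtain ⟨η, rfl⟩ := bang_of_isBang h
  rfl

/-- Sum of the `dc`-style contexts, tracked up to elements of `E`. -/
theorem sum_fst_dcmap {k : ℕ} {E : Multiset Fml} :
    ∀ dc : List (Atom × Multiset Atom),
    ∃ X : Multiset Fml, (∀ χ ∈ X, χ ∈ E) ∧
      ((dc.map (fun x => (Multiset.map (dec k) x.2 + E, unbang (dec k x.1)))).map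
        Prod.fst).sum = Multiset.map (dec k) ((dc.map Prod.snd).sum) + X := by
  intro dc
  induction dc with
  | nil => exact ⟨0, by simp, by simp⟩
  | cons x dc ih =>
      obtain ⟨X, hX, hsum⟩ := ih
      refine ⟨E + X, fun χ hχ => ?_, ?_⟩
      · rcases Multiset.mem_add.mp hχ with h | h
        · exact h
        · exact hX χ h
      · simp only [List.map_cons, List.sum_cons, hsum, Multiset.map_add]
        abel

theorem sum_fst_Emap {E : Multiset Fml} :
    ((E.toList.map (fun χ => (({χ} : Multiset Fml), unbang χ))).map Prod.fst).sum = E := by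
  have h1 : ((E.toList.map (fun χ => (({χ} : Multiset Fml), unbang χ))).map Prod.fst)
      = E.toList.map (fun χ => ({χ} : Multiset Fml)) := by
    rw [List.map_map]
    rfl
  rw [h1]
  have h2 : (E.toList.map (fun χ => ({χ} : Multiset Fml))).sum
      = (Multiset.map (fun χ => ({χ} : Multiset Fml)) E).sum := by
    conv_rhs => rw [← Multiset.coe_toList E]
    rw [Multiset.map_coe, Multiset.sum_coe]
  rw [h2]
  exact Multiset.sum_map_singleton E

/-- Soundness of the simulation base w.r.t. N_ILL. -/
theorem sound {k : ℕ} {E : Multiset Fml} (hE : ∀ χ ∈ E, isBang χ = true)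
    {L : Multiset Atom} {p : Atom}
    (h : Deriv (simBase k ∪ axBase k E) L p) :
    NDeriv (Multiset.map (dec k) L + E) (dec k p) := by
  induction h with
  | ref p => simpa using ndWkE hE (NDeriv.ax (dec k p))
  | app S p bc dc hrule hpers hbox hd hS ihbox ihd ihS =>
      have hok : ∀ x ∈ dc, ∃ η, NDeriv (Multiset.map (dec k) x.2 + E) (Fml.bang η) := by
        intro x hx
        obtain ⟨γ, hγ⟩ := persistent_char (hpers x hx)
        refine ⟨γ, ?_⟩
        have h2 := ihd x hx
        rw [hγ, dec_enc] at h2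
        exact h2
      have fold : ∀ {φG : Fml},
          NDeriv (Multiset.map (dec k) (bc.map Prod.snd).sum + E) φG →
          NDeriv (Multiset.map (dec k) ((bc.map Prod.snd).sum + (dc.map Prod.snd).sum)
            + E) φG := by
        intro φG h2
        rw [Multiset.map_add]
        exact ndFoldDc hE dc hok h2
      have ob : ∀ {bc' : List (Box × Multiset Atom)} {B1 : Box},
          (↑(bc'.map Prod.fst) : Multiset Box) = {B1} →
          (∀ x ∈ bc', ∀ s ∈ x.1,
            NDeriv (Multiset.map (dec k) (x.2 + s.1) + E) (dec k s.2)) →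
          ∃ M1, (bc'.map Prod.snd).sum = M1 ∧
            ∀ s ∈ B1, NDeriv (Multiset.map (dec k) (M1 + s.1) + E) (dec k s.2) :=
        fun h1 ih => oneBox h1 ih
      have tb : ∀ {bc' : List (Box × Multiset Atom)} {B1 B2 : Box},
          (↑(bc'.map Prod.fst) : Multiset Box) = {B1, B2} →
          (∀ x ∈ bc', ∀ s ∈ x.1,
            NDeriv (Multiset.map (dec k) (x.2 + s.1) + E) (dec k s.2)) →
          ∃ M1 M2, (bc'.map Prod.snd).sum = M1 + M2 ∧
            (∀ s ∈ B1, NDeriv (Multiset.map (dec k) (M1 + s.1) + E) (dec k s.2)) ∧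
            (∀ s ∈ B2, NDeriv (Multiset.map (dec k) (M2 + s.1) + E) (dec k s.2)) :=
        fun h1 ih => twoBox h1 ih
      have ndCut : ∀ {G D : Multiset Fml} {χ₁ χ₂ : Fml}, NDeriv G χ₁ →
          NDeriv (D + {χ₁}) χ₂ → NDeriv (D + G) χ₂ :=
        fun h1 h2 => NDeriv.limpE (NDeriv.limpI h2) h1
      have norm2 : ∀ {M1 M2 : Multiset Atom} {φG : Fml},
          NDeriv ((Multiset.map (dec k) M1 + E) + (Multiset.map (dec k) M2 + E)) φG →
          NDeriv (Multiset.map (dec k) (M1 + M2) + E) φG := by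
        intro M1 M2 φG h2
        have heq : (Multiset.map (dec k) M1 + E) + (Multiset.map (dec k) M2 + E)
            = (Multiset.map (dec k) (M1 + M2)) + (E + E) := by
          rw [Multiset.map_add]
          abel
        rw [heq] at h2
        exact ndNormE hE (fun χ hχ => by
          rcases Multiset.mem_add.mp hχ with h' | h' <;> exact h') h2
      rcases hrule with hsim | hax
      · generalize hq : ((↑(List.map Prod.fst bc) : Multiset Box), S, p) = r at hsim
        cases hsim with
        | a1 q hlt =>
            simp only [Prod.mk.injEq] at hq
            obtain ⟨h1, h2, h3⟩ := hq
            rw [h3]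
            apply fold
            obtain ⟨M1, hsum, hP⟩ := ob h1 ihbox
            have P := hP (0, q) (by simp [bx])
            rw [hsum]
            rw [dec_enc]
            rw [dec_lt hlt] at P
            simpa using P
        | a2 q hlt =>
            simp only [Prod.mk.injEq] at hq
            obtain ⟨h1, h2, h3⟩ := hq
            rw [h3]
            apply fold
            obtain ⟨M1, hsum, hP⟩ := ob h1 ihbox
            have P := hP (0, enc k (.atom q)) (by simp [bx])
            rw [dec_enc] at P
            rw [hsum, dec_lt hlt]
            simpa using P
        | t1 =>
            simp only [Prod.mk.injEq] at hq
            obtain ⟨h1, h2, h3⟩ := hq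
            rw [h3]
            apply fold
            rw [zeroBox h1, dec_enc]
            have h0 : NDeriv 0 Fml.top := by simpa using NDeriv.topI [] (by simp)
            simpa using ndWkE hE h0
        | t2 q =>
            simp only [Prod.mk.injEq] at hq
            obtain ⟨h1, h2, h3⟩ := hq
            rw [h3]
            apply fold
            obtain ⟨M1, M2, hsum, hP1, hP2⟩ := tb h1 ihbox
            have P1 : NDeriv (Multiset.map (dec k) M1 + E) (dec k q) := by
              simpa using hP1 (0, q) (by simp [bx])
            have P2 : NDeriv (Multiset.map (dec k) M2 + E) Fml.top := by
              have := hP2 (0, enc k .top) (by simp [bx])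
              rw [dec_enc] at this
              simpa using this
            rw [hsum, dec_enc]
            apply norm2
            have := NDeriv.topI [(Multiset.map (dec k) M1 + E, dec k q),
              (Multiset.map (dec k) M2 + E, Fml.top)] (by
                intro x hx
                simp only [List.mem_cons, List.mem_singleton, List.not_mem_nil,
                  or_false] at hx
                rcases hx with rfl | rfl
                · exact P1
                · exact P2)
            simpa using this
        | z1 q =>
            simp only [Prod.mk.injEq] at hq
            obtain ⟨h1, h2, h3⟩ := hq
            rw [h3]
            apply fold
            obtain ⟨M1, hsum, hP⟩ := ob h1 ihbox
            have P : NDeriv (Multiset.map (dec k) M1 + E) Fml.zero := by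
              have := hP (0, enc k .zero) (by simp [bx])
              rw [dec_enc] at this
              simpa using this
            rw [hsum]
            simpa using NDeriv.zeroE (χ := dec k q) [] (by simp) P
        | z2 q =>
            simp only [Prod.mk.injEq] at hq
            obtain ⟨h1, h2, h3⟩ := hq
            rw [h3]
            apply fold
            obtain ⟨M1, M2, hsum, hP1, hP2⟩ := tb h1 ihbox
            have P1 : NDeriv (Multiset.map (dec k) M1 + E) Fml.zero := by
              have := hP1 (0, enc k .zero) (by simp [bx])
              rw [dec_enc] at this
              simpa using this
            have P2 : NDeriv (Multiset.map (dec k) M2 + E) (dec k q) := by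
              simpa using hP2 (0, q) (by simp [bx])
            rw [hsum, dec_enc]
            apply norm2
            have := NDeriv.zeroE (χ := Fml.zero)
              [(Multiset.map (dec k) M2 + E, dec k q)] (by
                intro x hx
                simp only [List.mem_singleton] at hx
                subst hx
                exact P2) P1
            have heq : ((([(Multiset.map (dec k) M2 + E, dec k q)]).map Prod.fst).sum)
                + (Multiset.map (dec k) M1 + E)
                = (Multiset.map (dec k) M1 + E) + (Multiset.map (dec k) M2 + E) := by
              simp
              abel
            rw [heq] at this
            exact this
        | o1 =>
            simp only [Prod.mk.injEq] at hq
            obtain ⟨h1, h2, h3⟩ := hq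
            rw [h3]
            apply fold
            rw [zeroBox h1, dec_enc]
            simpa using ndWkE hE NDeriv.oneI
        | o2 q =>
            simp only [Prod.mk.injEq] at hq
            obtain ⟨h1, h2, h3⟩ := hq
            rw [h3]
            apply fold
            obtain ⟨M1, M2, hsum, hP1, hP2⟩ := tb h1 ihbox
            have P1 : NDeriv (Multiset.map (dec k) M1 + E) Fml.one := by
              have := hP1 (0, enc k .one) (by simp [bx])
              rw [dec_enc] at this
              simpa using this
            have P2 : NDeriv (Multiset.map (dec k) M2 + E) (dec k q) := by
              simpa using hP2 (0, q) (by simp [bx])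
            rw [hsum]
            exact norm2 (NDeriv.oneE P1 P2)
        | li φ ψ =>
            simp only [Prod.mk.injEq] at hq
            obtain ⟨h1, h2, h3⟩ := hq
            rw [h3]
            apply fold
            obtain ⟨M1, hsum, hP⟩ := ob h1 ihbox
            have P := hP ({enc k φ}, enc k ψ) (by simp [bx])
            rw [dec_enc] at P
            have P' : NDeriv ((Multiset.map (dec k) M1 + E) + {φ}) ψ := by
              have heq : Multiset.map (dec k) (M1 + {enc k φ}) + E
                  = (Multiset.map (dec k) M1 + E) + {φ} := by
                rw [Multiset.map_add, Multiset.map_singleton, dec_enc]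
                abel
              rw [heq] at P
              exact P
            rw [hsum, dec_enc]
            exact NDeriv.limpI P'
        | le φ ψ =>
            simp only [Prod.mk.injEq] at hq
            obtain ⟨h1, h2, h3⟩ := hq
            rw [h3]
            apply fold
            obtain ⟨M1, M2, hsum, hP1, hP2⟩ := tb h1 ihbox
            have P1 : NDeriv (Multiset.map (dec k) M1 + E) (Fml.limp φ ψ) := by
              have := hP1 (0, enc k (.limp φ ψ)) (by simp [bx])
              rw [dec_enc] at this
              simpa using this
            have P2 : NDeriv (Multiset.map (dec k) M2 + E) φ := by
              have := hP2 (0, enc k φ) (by simp [bx])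
              rw [dec_enc] at this
              simpa using this
            rw [hsum, dec_enc]
            exact norm2 (NDeriv.limpE P1 P2)
        | ti φ ψ =>
            simp only [Prod.mk.injEq] at hq
            obtain ⟨h1, h2, h3⟩ := hq
            rw [h3]
            apply fold
            obtain ⟨M1, M2, hsum, hP1, hP2⟩ := tb h1 ihbox
            have P1 : NDeriv (Multiset.map (dec k) M1 + E) φ := by
              have := hP1 (0, enc k φ) (by simp [bx])
              rw [dec_enc] at this
              simpa using this
            have P2 : NDeriv (Multiset.map (dec k) M2 + E) ψ := by
              have := hP2 (0, enc k ψ) (by simp [bx])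
              rw [dec_enc] at this
              simpa using this
            rw [hsum, dec_enc]
            exact norm2 (NDeriv.tensI P1 P2)
        | te φ ψ q =>
            simp only [Prod.mk.injEq] at hq
            obtain ⟨h1, h2, h3⟩ := hq
            rw [h3]
            apply fold
            obtain ⟨M1, M2, hsum, hP1, hP2⟩ := tb h1 ihbox
            have P1 : NDeriv (Multiset.map (dec k) M1 + E) (Fml.tens φ ψ) := by
              have := hP1 (0, enc k (.tens φ ψ)) (by simp [bx])
              rw [dec_enc] at this
              simpa using this
            have P2 : NDeriv ((Multiset.map (dec k) M2 + E) + {φ, ψ}) (dec k q) := by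
              have h5 := hP2 ({enc k φ, enc k ψ}, q) (by simp [bx])
              have heq : Multiset.map (dec k) (M2 + {enc k φ, enc k ψ}) + E
                  = (Multiset.map (dec k) M2 + E) + {φ, ψ} := by
                rw [Multiset.map_add]
                have : Multiset.map (dec k) ({enc k φ, enc k ψ} : Multiset Atom)
                    = ({φ, ψ} : Multiset Fml) := by
                  rw [Multiset.insert_eq_cons, Multiset.map_cons, Multiset.map_singleton,
                    dec_enc, dec_enc]
                  rfl
                rw [this]
                abel
              rw [heq] at h5
              exact h5
            rw [hsum]
            exact norm2 (NDeriv.tensE P1 P2)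
        | wi φ ψ =>
            simp only [Prod.mk.injEq] at hq
            obtain ⟨h1, h2, h3⟩ := hq
            rw [h3]
            apply fold
            obtain ⟨M1, hsum, hP⟩ := ob h1 ihbox
            have P1 : NDeriv (Multiset.map (dec k) M1 + E) φ := by
              have := hP (0, enc k φ) (by simp)
              rw [dec_enc] at this
              simpa using this
            have P2 : NDeriv (Multiset.map (dec k) M1 + E) ψ := by
              have := hP (0, enc k ψ) (by simp)
              rw [dec_enc] at this
              simpa using this
            rw [hsum, dec_enc]
            exact NDeriv.wthI P1 P2
        | we1 φ ψ =>
            simp only [Prod.mk.injEq] at hq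
            obtain ⟨h1, h2, h3⟩ := hq
            rw [h3]
            apply fold
            obtain ⟨M1, hsum, hP⟩ := ob h1 ihbox
            have P : NDeriv (Multiset.map (dec k) M1 + E) (Fml.wth φ ψ) := by
              have := hP (0, enc k (.wth φ ψ)) (by simp [bx])
              rw [dec_enc] at this
              simpa using this
            rw [hsum, dec_enc]
            exact NDeriv.wthE1 P
        | we2 φ ψ =>
            simp only [Prod.mk.injEq] at hq
            obtain ⟨h1, h2, h3⟩ := hq
            rw [h3]
            apply fold
            obtain ⟨M1, hsum, hP⟩ := ob h1 ihbox
            have P : NDeriv (Multiset.map (dec k) M1 + E) (Fml.wth φ ψ) := by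
              have := hP (0, enc k (.wth φ ψ)) (by simp [bx])
              rw [dec_enc] at this
              simpa using this
            rw [hsum, dec_enc]
            exact NDeriv.wthE2 P
        | pi1 φ ψ =>
            simp only [Prod.mk.injEq] at hq
            obtain ⟨h1, h2, h3⟩ := hq
            rw [h3]
            apply fold
            obtain ⟨M1, hsum, hP⟩ := ob h1 ihbox
            have P : NDeriv (Multiset.map (dec k) M1 + E) φ := by
              have := hP (0, enc k φ) (by simp [bx])
              rw [dec_enc] at this
              simpa using this
            rw [hsum, dec_enc]
            exact NDeriv.plusI1 P
        | pi2 φ ψ =>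
            simp only [Prod.mk.injEq] at hq
            obtain ⟨h1, h2, h3⟩ := hq
            rw [h3]
            apply fold
            obtain ⟨M1, hsum, hP⟩ := ob h1 ihbox
            have P : NDeriv (Multiset.map (dec k) M1 + E) ψ := by
              have := hP (0, enc k ψ) (by simp [bx])
              rw [dec_enc] at this
              simpa using this
            rw [hsum, dec_enc]
            exact NDeriv.plusI2 P
        | pe φ ψ q =>
            simp only [Prod.mk.injEq] at hq
            obtain ⟨h1, h2, h3⟩ := hq
            rw [h3]
            apply fold
            obtain ⟨M1, M2, hsum, hP1, hP2⟩ := tb h1 ihbox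
            have P1 : NDeriv (Multiset.map (dec k) M1 + E) (Fml.plus φ ψ) := by
              have := hP1 (0, enc k (.plus φ ψ)) (by simp [bx])
              rw [dec_enc] at this
              simpa using this
            have P2a : NDeriv ((Multiset.map (dec k) M2 + E) + {φ}) (dec k q) := by
              have h5 := hP2 ({enc k φ}, q) (by simp)
              have heq : Multiset.map (dec k) (M2 + {enc k φ}) + E
                  = (Multiset.map (dec k) M2 + E) + {φ} := by
                rw [Multiset.map_add, Multiset.map_singleton, dec_enc]
                abel
              rw [heq] at h5
              exact h5
            have P2b : NDeriv ((Multiset.map (dec k) M2 + E) + {ψ}) (dec k q) := by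
              have h5 := hP2 ({enc k ψ}, q) (by simp)
              have heq : Multiset.map (dec k) (M2 + {enc k ψ}) + E
                  = (Multiset.map (dec k) M2 + E) + {ψ} := by
                rw [Multiset.map_add, Multiset.map_singleton, dec_enc]
                abel
              rw [heq] at h5
              exact h5
            rw [hsum]
            exact norm2 (NDeriv.plusE P1 P2a P2b)
        | pr α =>
            simp only [Prod.mk.injEq] at hq
            obtain ⟨h1, h2, h3⟩ := hq
            rw [h3, dec_enc]
            have hbc : bc = [] := list_map_eq_nil h1
            subst hbc
            have hSp : NDeriv (Multiset.map (dec k) (↑(dc.map Prod.fst) : Multiset Atom)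
                + E) α := by
              have := ihS (0, enc k α) (by rw [h2]; simp [bx])
              rw [dec_enc] at this
              simpa using this
            set l := dc.map (fun x => (Multiset.map (dec k) x.2 + E, unbang (dec k x.1)))
              ++ E.toList.map (fun χ => (({χ} : Multiset Fml), unbang χ)) with hl
            have hall : ∀ y ∈ l, NDeriv y.1 (.bang y.2) := by
              intro y hy
              rw [hl] at hy
              rcases List.mem_append.mp hy with hy | hy
              · obtain ⟨x, hx, rfl⟩ := List.mem_map.mp hy
                obtain ⟨γ, hγ⟩ := persistent_char (hpers x hx)
                have h5 := ihd x hx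
                have h6 : Fml.bang (unbang (dec k x.1)) = dec k x.1 := by
                  rw [hγ, dec_enc]
                  rfl
                simp only []
                rw [h6]
                exact h5
              · obtain ⟨χ, hχ, rfl⟩ := List.mem_map.mp hy
                have hχE : χ ∈ E := Multiset.mem_toList.mp hχ
                have h6 : Fml.bang (unbang χ) = χ := bang_unbang (hE χ hχE)
                simp only []
                rw [h6]
                exact NDeriv.ax χ
            have hsec : (↑(l.map (fun x => Fml.bang x.2)) : Multiset Fml)
                = Multiset.map (dec k) (↑(dc.map Prod.fst) : Multiset Atom) + E := by
              rw [hl, List.map_append, ← Multiset.coe_add]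
              congr 1
              · rw [List.map_map]
                have hcong : dc.map ((fun x => Fml.bang x.2) ∘
                    (fun x : Atom × Multiset Atom =>
                      (Multiset.map (dec k) x.2 + E, unbang (dec k x.1))))
                    = dc.map (fun x => dec k x.1) := by
                  apply List.map_congr_left
                  intro x hx
                  obtain ⟨γ, hγ⟩ := persistent_char (hpers x hx)
                  simp only [Function.comp]
                  rw [hγ, dec_enc]
                  rfl
                rw [hcong]
                rw [Multiset.map_coe, List.map_map]
                rfl
              · rw [List.map_map]
                have hcong : E.toList.map ((fun x => Fml.bang x.2) ∘
                    (fun χ : Fml => (({χ} : Multiset Fml), unbang χ)))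
                    = E.toList.map id := by
                  apply List.map_congr_left
                  intro χ hχ
                  exact bang_unbang (hE χ (Multiset.mem_toList.mp hχ))
                rw [hcong, List.map_id]
                exact Multiset.coe_toList E
            have hprom := NDeriv.prom l hall (by rw [hsec]; exact hSp)
            obtain ⟨X, hX, hXsum⟩ := sum_fst_dcmap (k := k) (E := E) dc
            have hfsum : ((l.map Prod.fst).sum : Multiset Fml)
                = Multiset.map (dec k) ((dc.map Prod.snd).sum) + (X + E) := by
              rw [hl, List.map_append, List.sum_append, hXsum, sum_fst_Emap]
              abel
            rw [hfsum] at hprom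
            have hres := ndNormE hE (X := X + E) (fun χ hχ => by
              rcases Multiset.mem_add.mp hχ with h' | h'
              · exact hX χ h'
              · exact h') hprom
            simpa using hres
        | dr α =>
            simp only [Prod.mk.injEq] at hq
            obtain ⟨h1, h2, h3⟩ := hq
            rw [h3]
            apply fold
            obtain ⟨M1, hsum, hP⟩ := ob h1 ihbox
            have P : NDeriv (Multiset.map (dec k) M1 + E) (Fml.bang α) := by
              have := hP (0, enc k (.bang α)) (by simp [bx])
              rw [dec_enc] at this
              simpa using this
            rw [hsum, dec_enc]
            have := NDeriv.der (Δ := 0) P (by simpa using NDeriv.ax α)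
            simpa using this
        | idr q =>
            simp only [Prod.mk.injEq] at hq
            obtain ⟨h1, h2, h3⟩ := hq
            rw [h3]
            apply fold
            obtain ⟨M1, hsum, hP⟩ := ob h1 ihbox
            have P : NDeriv (Multiset.map (dec k) M1 + E) (dec k q) := by
              simpa using hP (0, q) (by simp [bx])
            rw [hsum]
            exact P
        | ct α q =>
            simp only [Prod.mk.injEq] at hq
            obtain ⟨h1, h2, h3⟩ := hq
            rw [h3]
            apply fold
            obtain ⟨M1, M2, hsum, hP1, hP2⟩ := tb h1 ihbox
            have P1 : NDeriv ((Multiset.map (dec k) M1 + E)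
                + {Fml.bang α, Fml.bang α}) (dec k q) := by
              have h5 := hP1 ({enc k (.bang α), enc k (.bang α)}, q) (by simp [bx])
              have heq : Multiset.map (dec k) (M1 + {enc k (.bang α), enc k (.bang α)}) + E
                  = (Multiset.map (dec k) M1 + E) + {Fml.bang α, Fml.bang α} := by
                rw [Multiset.map_add]
                have : Multiset.map (dec k) ({enc k (.bang α), enc k (.bang α)}
                    : Multiset Atom) = ({Fml.bang α, Fml.bang α} : Multiset Fml) := by
                  rw [Multiset.insert_eq_cons, Multiset.map_cons, Multiset.map_singleton,
                    dec_enc]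
                  rfl
                rw [this]
                abel
              rw [heq] at h5
              exact h5
            have P2 : NDeriv (Multiset.map (dec k) M2 + E) (Fml.bang α) := by
              have := hP2 (0, enc k (.bang α)) (by simp [bx])
              rw [dec_enc] at this
              simpa using this
            rw [hsum, add_comm M1 M2]
            exact norm2 (NDeriv.ctr P2 P1)
        | cut α q =>
            simp only [Prod.mk.injEq] at hq
            obtain ⟨h1, h2, h3⟩ := hq
            rw [h3]
            apply fold
            obtain ⟨M1, M2, hsum, hP1, hP2⟩ := tb h1 ihbox
            have P1 : NDeriv (Multiset.map (dec k) M1 + E) (Fml.bang α) := by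
              have := hP1 (0, enc k (.bang α)) (by simp [bx])
              rw [dec_enc] at this
              simpa using this
            have P2 : NDeriv ((Multiset.map (dec k) M2 + E) + {Fml.bang α}) (dec k q) := by
              have h5 := hP2 ({enc k (.bang α)}, q) (by simp [bx])
              have heq : Multiset.map (dec k) (M2 + {enc k (.bang α)}) + E
                  = (Multiset.map (dec k) M2 + E) + {Fml.bang α} := by
                rw [Multiset.map_add, Multiset.map_singleton, dec_enc]
                abel
              rw [heq] at h5
              exact h5
            rw [hsum, add_comm M1 M2]
            exact norm2 (ndCut P1 P2)
      · obtain ⟨χ, hχE, heq⟩ := hax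
        simp only [Prod.mk.injEq] at heq
        obtain ⟨h1, h2, h3⟩ := heq
        rw [h3]
        apply fold
        rw [zeroBox h1, dec_enc]
        obtain ⟨η, rfl⟩ := bang_of_isBang (hE χ hχE)
        have h0 : NDeriv ((0 : Multiset Fml) + {Fml.bang η}) η := by
          simpa using ndBangElim η
        have hres := ndNormE hE (X := {Fml.bang η}) (fun x hx => by
          rw [Multiset.mem_singleton.mp hx]; exact hχE) h0
        simpa [unbang] using hres

theorem bang_cases (φ : Fml) : (∃ α, φ = Fml.bang α) ∨ isBang φ = false := by
  cases φ <;> simp [isBang]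

theorem supp_atom {B L p} : Supp B L (.atom p) = Deriv B L p := by simp [Supp]
theorem supp_top {B L} : Supp B L .top = True := by simp [Supp]
theorem supp_zero {B L} : Supp B L .zero
    = ∀ (K : Multiset Atom) (p : Atom), Supp B (L + K) (.atom p) := by simp [Supp]
theorem supp_one {B L} : Supp B L .one = ∀ C : Base, B ⊆ C → ∀ (K : Multiset Atom)
    (p : Atom), Supp C K (.atom p) → Supp C (L + K) (.atom p) := by simp [Supp]
theorem supp_limp {B L φ ψ} : Supp B L (.limp φ ψ) = SuppInf1 B L φ ψ := by simp [Supp]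
theorem supp_tens {B L φ ψ} : Supp B L (.tens φ ψ) = ∀ C : Base, B ⊆ C →
    ∀ (K : Multiset Atom) (p : Atom), SuppInf2 C K φ ψ (.atom p)
    → Supp C (L + K) (.atom p) := by simp [Supp]
theorem supp_wth {B L φ ψ} : Supp B L (.wth φ ψ) = (Supp B L φ ∧ Supp B L ψ) := by
  simp [Supp]
theorem supp_plus {B L φ ψ} : Supp B L (.plus φ ψ) = ∀ C : Base, B ⊆ C →
    ∀ (K : Multiset Atom) (p : Atom), SuppInf1 C K φ (.atom p) →
    SuppInf1 C K ψ (.atom p) → Supp C (L + K) (.atom p) := by simp [Supp]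
theorem supp_bang {B L φ} : Supp B L (.bang φ) = ∀ C : Base, B ⊆ C →
    ∀ (K : Multiset Atom) (p : Atom),
    (∀ D : Base, C ⊆ D → Supp D 0 φ → Supp D K (.atom p)) → Supp C (L + K) (.atom p) := by
  simp [Supp]

theorem suppInf1_bang {B L α χ} : SuppInf1 B L (.bang α) χ
    = ∀ C : Base, B ⊆ C → Supp C 0 α → Supp C L χ := by simp [SuppInf1]

theorem suppInf1_nb {B L φ χ} (h : isBang φ = false) : SuppInf1 B L φ χ
    = ∀ C : Base, B ⊆ C → ∀ K : Multiset Atom, Supp C K φ → Supp C (L + K) χ := by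
  cases φ
  case bang α => simp [isBang] at h
  all_goals simp [SuppInf1]

theorem suppInf2_bb {B L α β χ} : SuppInf2 B L (.bang α) (.bang β) χ
    = ∀ C : Base, B ⊆ C → Supp C 0 α → Supp C 0 β → Supp C L χ := by simp [SuppInf2]

theorem suppInf2_bn {B L α ψ χ} (h : isBang ψ = false) : SuppInf2 B L (.bang α) ψ χ
    = ∀ C : Base, B ⊆ C → ∀ K : Multiset Atom,
      Supp C 0 α → Supp C K ψ → Supp C (L + K) χ := by
  cases ψ
  case bang β => simp [isBang] at h
  all_goals simp [SuppInf2]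

theorem suppInf2_nb {B L φ β χ} (h : isBang φ = false) : SuppInf2 B L φ (.bang β) χ
    = ∀ C : Base, B ⊆ C → ∀ K : Multiset Atom,
      Supp C 0 β → Supp C K φ → Supp C (L + K) χ := by
  cases φ
  case bang α => simp [isBang] at h
  all_goals simp [SuppInf2]

theorem suppInf2_nn {B L φ ψ χ} (hφ : isBang φ = false) (hψ : isBang ψ = false) :
    SuppInf2 B L φ ψ χ
    = ∀ C : Base, B ⊆ C → ∀ K₁ K₂ : Multiset Atom,
      Supp C K₁ φ → Supp C K₂ ψ → Supp C (L + K₁ + K₂) χ := by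
  cases φ
  case bang α => simp [isBang] at hφ
  all_goals
    cases ψ
    case bang β => simp [isBang] at hψ
    all_goals simp [SuppInf2]

/-- Monotonicity of support in the base. -/
theorem suppMono : ∀ (φ : Fml) {B C : Base}, B ⊆ C → ∀ {L : Multiset Atom},
    Supp B L φ → Supp C L φ := by
  intro φ
  induction φ with
  | atom a => intro B C hBC L h
              rw [supp_atom] at h ⊢
              exact h.mono hBC
  | top => intro B C hBC L h; rw [supp_top]; trivial
  | zero => intro B C hBC L h
            rw [supp_zero] at h ⊢
            intro K p
            have h2 := h K p
            rw [supp_atom] at h2 ⊢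
            exact h2.mono hBC
  | one => intro B C hBC L h
           rw [supp_one] at h ⊢
           exact fun D hD => h D (hBC.trans hD)
  | limp φ ψ ihφ ihψ =>
      intro B C hBC L h
      rw [supp_limp] at h ⊢
      rcases bang_cases φ with ⟨α, rfl⟩ | hnb
      · rw [suppInf1_bang] at h ⊢
        exact fun D hD => h D (hBC.trans hD)
      · rw [suppInf1_nb hnb] at h ⊢
        exact fun D hD => h D (hBC.trans hD)
  | tens φ ψ ihφ ihψ =>
      intro B C hBC L h
      rw [supp_tens] at h ⊢
      exact fun D hD => h D (hBC.trans hD)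
  | wth φ ψ ihφ ihψ =>
      intro B C hBC L h
      rw [supp_wth] at h ⊢
      exact ⟨ihφ hBC h.1, ihψ hBC h.2⟩
  | plus φ ψ ihφ ihψ =>
      intro B C hBC L h
      rw [supp_plus] at h ⊢
      exact fun D hD => h D (hBC.trans hD)
  | bang φ ihφ =>
      intro B C hBC L h
      rw [supp_bang] at h ⊢
      exact fun D hD => h D (hBC.trans hD)

/-- Replace a hypothetical axiom `⊢ enc k α` by the `!`-atom. -/
theorem bang_extract {k : ℕ} {C : Base} (hk : simBase k ⊆ C) {α : Fml}
    (hFL : ∀ D : Base, simBase k ⊆ D → ∀ L, (Supp D L α ↔ Deriv D L (enc k α)))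
    {M : Multiset Atom} {q : Atom}
    (h : ∀ D : Base, C ⊆ D → Supp D 0 α → Deriv D M q) :
    Deriv C (M + {enc k (.bang α)}) q := by
  have hsub : C ⊆ C ∪ {axr (enc k α)} := Set.subset_union_left
  have hk' : simBase k ⊆ C ∪ {axr (enc k α)} := hk.trans hsub
  have hax : Deriv (C ∪ {axr (enc k α)}) 0 (enc k α) :=
    dapp0 (Set.mem_union_right _ rfl)
  have hα : Supp (C ∪ {axr (enc k α)}) 0 α := (hFL _ hk' 0).mpr hax
  obtain ⟨X, hX, hd⟩ := axElim hk α (h _ hsub hα)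
  exact derivNorm hk hX hd

theorem pairctx (K : Multiset Atom) (a b : Atom) : K + {a} + {b} = K + {a, b} := by
  rw [Multiset.insert_eq_cons, ← Multiset.singleton_add a {b}]
  abel

/-- The flattening lemma. -/
theorem flatten {k : ℕ} : ∀ (n : ℕ) (φ : Fml), deg φ ≤ n → Good k φ →
    ∀ C : Base, simBase k ⊆ C → ∀ L : Multiset Atom,
      (Supp C L φ ↔ Deriv C L (enc k φ)) := by
  intro n
  induction n with
  | zero => intro φ hdeg _ _ _ _; have := one_le_deg φ; omega
  | succ n ih =>
    intro φ hdeg hG C hk L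
    cases φ with
    | atom a =>
        have ha : a < k := hG
        rw [supp_atom]
        constructor
        · intro h
          refine dapp1 (hk (SimRule.a1 a ha)) ?_
          intro s hs
          simp only [bx, Multiset.mem_singleton] at hs
          subst hs
          simpa using h
        · intro h
          refine dapp1 (hk (SimRule.a2 a ha)) ?_
          intro s hs
          simp only [bx, Multiset.mem_singleton] at hs
          subst hs
          simpa using h
    | top =>
        rw [supp_top]
        constructor
        · intro _
          induction L using Multiset.induction with
          | empty => exact dapp0 (hk SimRule.t1)
          | @cons q L ihL =>
              have h2 := dapp2 (B := C) (M₁ := ({q} : Multiset Atom)) (M₂ := L)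
                (hk (SimRule.t2 q))
                (fun s hs => by
                  simp only [bx, Multiset.mem_singleton] at hs; subst hs
                  simpa using Deriv.ref q)
                (fun s hs => by
                  simp only [bx, Multiset.mem_singleton] at hs; subst hs
                  simpa using ihL)
              simpa [← Multiset.singleton_add] using h2
        · intro _
          trivial
    | zero =>
        rw [supp_zero]
        constructor
        · intro h
          have h2 := h 0 (enc k .zero)
          rw [supp_atom] at h2
          simpa using h2
        · intro h K p
          rw [supp_atom]
          have habs : ∀ K' : Multiset Atom, Deriv C (L + K') (enc k .zero) := by
            intro K'
            induction K' using Multiset.induction with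
            | empty => simpa using h
            | @cons q K' ihK =>
                have h2 := dapp2 (B := C) (M₁ := L + K') (M₂ := ({q} : Multiset Atom))
                  (hk (SimRule.z2 q))
                  (fun s hs => by
                    simp only [bx, Multiset.mem_singleton] at hs; subst hs
                    simpa using ihK)
                  (fun s hs => by
                    simp only [bx, Multiset.mem_singleton] at hs; subst hs
                    simpa using Deriv.ref q)
                have heq : L + K' + {q} = L + (q ::ₘ K') := by
                  rw [← Multiset.singleton_add q K']
                  abel
                rw [heq] at h2
                exact h2
          refine dapp1 (hk (SimRule.z1 p)) ?_
          intro s hs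
          simp only [bx, Multiset.mem_singleton] at hs
          subst hs
          simpa using habs K
    | one =>
        rw [supp_one]
        constructor
        · intro h
          have h0 : Supp C 0 (.atom (enc k .one)) := by
            rw [supp_atom]
            exact dapp0 (hk SimRule.o1)
          have h2 := h C (subset_refl C) 0 (enc k .one) h0
          rw [supp_atom] at h2
          simpa using h2
        · intro h D hD K p hKp
          rw [supp_atom] at hKp ⊢
          exact dapp2 (M₁ := L) (M₂ := K) ((hk.trans hD) (SimRule.o2 p))
            (fun s hs => by
              simp only [bx, Multiset.mem_singleton] at hs; subst hs
              simpa using h.mono hD)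
            (fun s hs => by
              simp only [bx, Multiset.mem_singleton] at hs; subst hs
              simpa using hKp)
    | limp φ ψ =>
        have hdφψ : deg φ + deg ψ + 1 ≤ n + 1 := by simpa [deg] using hdeg
        have h1φ := one_le_deg φ
        have h1ψ := one_le_deg ψ
        have hGφ : Good k φ := by simp only [Good, maxAtom] at hG ⊢; omega
        have hGψ : Good k ψ := by simp only [Good, maxAtom] at hG ⊢; omega
        have IHψ := ih ψ (by omega) hGψ
        rw [supp_limp]
        rcases bang_cases φ with ⟨α, rfl⟩ | hnb
        · have hdα : deg (Fml.bang α) = deg α + 1 := by simp [deg]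
          have hGα : Good k α := by simpa [Good, maxAtom] using hGφ
          have IHα := ih α (by omega) hGα
          rw [suppInf1_bang]
          constructor
          · intro h
            refine dapp1 (hk (SimRule.li (.bang α) ψ)) ?_
            intro s hs
            simp only [bx, Multiset.mem_singleton] at hs
            subst hs
            exact bang_extract hk IHα
              (fun D hD hα => (IHψ D (hk.trans hD) L).mp (h D hD hα))
          · intro h D hD hα
            have hkD := hk.trans hD
            refine (IHψ D hkD L).mpr ?_
            have h2 := dapp2 (M₁ := L) (M₂ := (0 : Multiset Atom))
              (hkD (SimRule.le (.bang α) ψ))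
              (fun s hs => by
                simp only [bx, Multiset.mem_singleton] at hs; subst hs
                simpa using h.mono hD)
              (fun s hs => by
                simp only [bx, Multiset.mem_singleton] at hs; subst hs
                simpa using derivPr hkD ((IHα D hkD 0).mp hα))
            simpa using h2
        · have IHφ := ih φ (by omega) hGφ
          rw [suppInf1_nb hnb]
          constructor
          · intro h
            refine dapp1 (hk (SimRule.li φ ψ)) ?_
            intro s hs
            simp only [bx, Multiset.mem_singleton] at hs
            subst hs
            have h2 := h C (subset_refl C) {enc k φ}
              ((IHφ C hk _).mpr (Deriv.ref _))
            exact (IHψ C hk _).mp h2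
          · intro h D hD K hK
            have hkD := hk.trans hD
            refine (IHψ D hkD _).mpr ?_
            exact dapp2 (M₁ := L) (M₂ := K) (hkD (SimRule.le φ ψ))
              (fun s hs => by
                simp only [bx, Multiset.mem_singleton] at hs; subst hs
                simpa using h.mono hD)
              (fun s hs => by
                simp only [bx, Multiset.mem_singleton] at hs; subst hs
                simpa using (IHφ D hkD K).mp hK)
    | wth φ ψ =>
        have hdφψ : deg φ + deg ψ + 1 ≤ n + 1 := by simpa [deg] using hdeg
        have h1φ := one_le_deg φ
        have h1ψ := one_le_deg ψ
        have hGφ : Good k φ := by simp only [Good, maxAtom] at hG ⊢; omega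
        have hGψ : Good k ψ := by simp only [Good, maxAtom] at hG ⊢; omega
        have IHφ := ih φ (by omega) hGφ
        have IHψ := ih ψ (by omega) hGψ
        rw [supp_wth]
        constructor
        · rintro ⟨h1, h2⟩
          refine dapp1 (hk (SimRule.wi φ ψ)) ?_
          intro s hs
          simp only [Multiset.insert_eq_cons, Multiset.mem_cons,
            Multiset.mem_singleton] at hs
          rcases hs with rfl | rfl
          · simpa using (IHφ C hk L).mp h1
          · simpa using (IHψ C hk L).mp h2
        · intro h
          constructor
          · refine (IHφ C hk L).mpr (dapp1 (hk (SimRule.we1 φ ψ)) ?_)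
            intro s hs
            simp only [bx, Multiset.mem_singleton] at hs
            subst hs
            simpa using h
          · refine (IHψ C hk L).mpr (dapp1 (hk (SimRule.we2 φ ψ)) ?_)
            intro s hs
            simp only [bx, Multiset.mem_singleton] at hs
            subst hs
            simpa using h
    | tens φ ψ =>
        have hdφψ : deg φ + deg ψ + 1 ≤ n + 1 := by simpa [deg] using hdeg
        have h1φ := one_le_deg φ
        have h1ψ := one_le_deg ψ
        have hGφ : Good k φ := by simp only [Good, maxAtom] at hG ⊢; omega
        have hGψ : Good k ψ := by simp only [Good, maxAtom] at hG ⊢; omega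
        rw [supp_tens]
        constructor
        · intro h
          have hinf : SuppInf2 C 0 φ ψ (.atom (enc k (.tens φ ψ))) := by
            rcases bang_cases φ with ⟨α, rfl⟩ | hnbφ <;>
              rcases bang_cases ψ with ⟨β, rfl⟩ | hnbψ
            · have hGα : Good k α := by simpa [Good, maxAtom] using hGφ
              have hGβ : Good k β := by simpa [Good, maxAtom] using hGψ
              have IHα := ih α (by simp [deg] at hdφψ; omega) hGα
              have IHβ := ih β (by simp [deg] at hdφψ; omega) hGβ
              rw [suppInf2_bb]
              intro E hE hα hβ
              rw [supp_atom]
              have hkE := hk.trans hE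
              have h2 := dapp2 (M₁ := (0 : Multiset Atom)) (M₂ := (0 : Multiset Atom))
                (hkE (SimRule.ti (.bang α) (.bang β)))
                (fun s hs => by
                  simp only [bx, Multiset.mem_singleton] at hs; subst hs
                  simpa using derivPr hkE ((IHα E hkE 0).mp hα))
                (fun s hs => by
                  simp only [bx, Multiset.mem_singleton] at hs; subst hs
                  simpa using derivPr hkE ((IHβ E hkE 0).mp hβ))
              simpa using h2
            · have hGα : Good k α := by simpa [Good, maxAtom] using hGφ
              have IHα := ih α (by simp [deg] at hdφψ; omega) hGα
              have IHψ := ih ψ (by omega) hGψ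
              rw [suppInf2_bn hnbψ]
              intro E hE K' hα hψ'
              rw [supp_atom]
              have hkE := hk.trans hE
              exact dapp2 (M₁ := (0 : Multiset Atom)) (M₂ := K')
                (hkE (SimRule.ti (.bang α) ψ))
                (fun s hs => by
                  simp only [bx, Multiset.mem_singleton] at hs; subst hs
                  simpa using derivPr hkE ((IHα E hkE 0).mp hα))
                (fun s hs => by
                  simp only [bx, Multiset.mem_singleton] at hs; subst hs
                  simpa using (IHψ E hkE K').mp hψ')
            · have hGβ : Good k β := by simpa [Good, maxAtom] using hGψ
              have IHβ := ih β (by simp [deg] at hdφψ; omega) hGβ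
              have IHφ := ih φ (by omega) hGφ
              rw [suppInf2_nb hnbφ]
              intro E hE K' hβ hφ'
              rw [supp_atom]
              have hkE := hk.trans hE
              have h2 := dapp2 (M₁ := K') (M₂ := (0 : Multiset Atom))
                (hkE (SimRule.ti φ (.bang β)))
                (fun s hs => by
                  simp only [bx, Multiset.mem_singleton] at hs; subst hs
                  simpa using (IHφ E hkE K').mp hφ')
                (fun s hs => by
                  simp only [bx, Multiset.mem_singleton] at hs; subst hs
                  simpa using derivPr hkE ((IHβ E hkE 0).mp hβ))
              simpa using h2
            · have IHφ := ih φ (by omega) hGφ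
              have IHψ := ih ψ (by omega) hGψ
              rw [suppInf2_nn hnbφ hnbψ]
              intro E hE K₁ K₂ hφ' hψ'
              rw [supp_atom]
              have hkE := hk.trans hE
              have h2 := dapp2 (M₁ := K₁) (M₂ := K₂) (hkE (SimRule.ti φ ψ))
                (fun s hs => by
                  simp only [bx, Multiset.mem_singleton] at hs; subst hs
                  simpa using (IHφ E hkE K₁).mp hφ')
                (fun s hs => by
                  simp only [bx, Multiset.mem_singleton] at hs; subst hs
                  simpa using (IHψ E hkE K₂).mp hψ')
              simpa [add_assoc] using h2
          have h2 := h C (subset_refl C) 0 (enc k (.tens φ ψ)) hinf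
          rw [supp_atom] at h2
          simpa using h2
        · intro h D hD K p hinf
          rw [supp_atom]
          have hkD := hk.trans hD
          have hbox2 : Deriv D (K + {enc k φ, enc k ψ}) p := by
            rcases bang_cases φ with ⟨α, rfl⟩ | hnbφ <;>
              rcases bang_cases ψ with ⟨β, rfl⟩ | hnbψ
            · have hGα : Good k α := by simpa [Good, maxAtom] using hGφ
              have hGβ : Good k β := by simpa [Good, maxAtom] using hGψ
              have IHα := ih α (by simp [deg] at hdφψ; omega) hGα
              have IHβ := ih β (by simp [deg] at hdφψ; omega) hGβ
              rw [suppInf2_bb] at hinf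
              have h5 := bang_extract (M := K + {enc k (.bang β)}) (q := p) hkD IHα
                (fun E hE hα => by
                  refine bang_extract (M := K) (q := p)
                    (hkD.trans (fun x hx => hE hx)) IHβ ?_
                  intro F hF hβ
                  have h6 := hinf F (hE.trans hF) (suppMono α hF hα) hβ
                  rw [supp_atom] at h6
                  exact h6)
              rw [pairctx] at h5
              have hsw : ({enc k (Fml.bang β), enc k (Fml.bang α)} : Multiset Atom)
                  = {enc k (Fml.bang α), enc k (Fml.bang β)} := by
                rw [Multiset.insert_eq_cons, Multiset.insert_eq_cons]
                exact Multiset.cons_swap _ _ _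
              rw [hsw] at h5
              exact h5
            · have hGα : Good k α := by simpa [Good, maxAtom] using hGφ
              have IHα := ih α (by simp [deg] at hdφψ; omega) hGα
              have IHψ := ih ψ (by omega) hGψ
              rw [suppInf2_bn hnbψ] at hinf
              have h5 := bang_extract (M := K + {enc k ψ}) hkD IHα
                (fun E hE hα => by
                  have h6 := hinf E hE {enc k ψ} hα
                    ((IHψ E (hkD.trans hE) _).mpr (Deriv.ref _))
                  rw [supp_atom] at h6
                  exact h6)
              have heq : K + {enc k ψ} + {enc k (Fml.bang α)}
                  = K + {enc k (Fml.bang α), enc k ψ} := by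
                rw [← pairctx]
                abel
              rw [heq] at h5
              exact h5
            · have hGβ : Good k β := by simpa [Good, maxAtom] using hGψ
              have IHβ := ih β (by simp [deg] at hdφψ; omega) hGβ
              have IHφ := ih φ (by omega) hGφ
              rw [suppInf2_nb hnbφ] at hinf
              have h5 := bang_extract (M := K + {enc k φ}) hkD IHβ
                (fun E hE hβ => by
                  have h6 := hinf E hE {enc k φ} hβ
                    ((IHφ E (hkD.trans hE) _).mpr (Deriv.ref _))
                  rw [supp_atom] at h6
                  exact h6)
              rw [pairctx] at h5
              exact h5
            · have IHφ := ih φ (by omega) hGφ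
              have IHψ := ih ψ (by omega) hGψ
              rw [suppInf2_nn hnbφ hnbψ] at hinf
              have h6 := hinf D (subset_refl D) {enc k φ} {enc k ψ}
                ((IHφ D hkD _).mpr (Deriv.ref _)) ((IHψ D hkD _).mpr (Deriv.ref _))
              rw [supp_atom] at h6
              rw [← pairctx]
              exact h6
          exact dapp2 (M₁ := L) (M₂ := K) (hkD (SimRule.te φ ψ p))
            (fun s hs => by
              simp only [bx, Multiset.mem_singleton] at hs; subst hs
              simpa using h.mono hD)
            (fun s hs => by
              simp only [bx, Multiset.mem_singleton] at hs; subst hs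
              simpa using hbox2)
    | plus φ ψ =>
        have hdφψ : deg φ + deg ψ + 1 ≤ n + 1 := by simpa [deg] using hdeg
        have h1φ := one_le_deg φ
        have h1ψ := one_le_deg ψ
        have hGφ : Good k φ := by simp only [Good, maxAtom] at hG ⊢; omega
        have hGψ : Good k ψ := by simp only [Good, maxAtom] at hG ⊢; omega
        rw [supp_plus]
        constructor
        · intro h
          have hi1 : SuppInf1 C 0 φ (.atom (enc k (.plus φ ψ))) := by
            rcases bang_cases φ with ⟨α, rfl⟩ | hnbφ
            · have hGα : Good k α := by simpa [Good, maxAtom] using hGφ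
              have IHα := ih α (by simp [deg] at hdφψ; omega) hGα
              rw [suppInf1_bang]
              intro E hE hα
              rw [supp_atom]
              have hkE := hk.trans hE
              refine dapp1 (hkE (SimRule.pi1 (.bang α) ψ)) ?_
              intro s hs
              simp only [bx, Multiset.mem_singleton] at hs
              subst hs
              simpa using derivPr hkE ((IHα E hkE 0).mp hα)
            · have IHφ := ih φ (by omega) hGφ
              rw [suppInf1_nb hnbφ]
              intro E hE K' hφ'
              rw [supp_atom]
              have hkE := hk.trans hE
              have h2 := dapp1 (M₁ := K') (hkE (SimRule.pi1 φ ψ))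
                (fun s hs => by
                  simp only [bx, Multiset.mem_singleton] at hs; subst hs
                  simpa using (IHφ E hkE K').mp hφ')
              simpa using h2
          have hi2 : SuppInf1 C 0 ψ (.atom (enc k (.plus φ ψ))) := by
            rcases bang_cases ψ with ⟨β, rfl⟩ | hnbψ
            · have hGβ : Good k β := by simpa [Good, maxAtom] using hGψ
              have IHβ := ih β (by simp [deg] at hdφψ; omega) hGβ
              rw [suppInf1_bang]
              intro E hE hβ
              rw [supp_atom]
              have hkE := hk.trans hE
              refine dapp1 (hkE (SimRule.pi2 φ (.bang β))) ?_
              intro s hs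
              simp only [bx, Multiset.mem_singleton] at hs
              subst hs
              simpa using derivPr hkE ((IHβ E hkE 0).mp hβ)
            · have IHψ := ih ψ (by omega) hGψ
              rw [suppInf1_nb hnbψ]
              intro E hE K' hψ'
              rw [supp_atom]
              have hkE := hk.trans hE
              have h2 := dapp1 (M₁ := K') (hkE (SimRule.pi2 φ ψ))
                (fun s hs => by
                  simp only [bx, Multiset.mem_singleton] at hs; subst hs
                  simpa using (IHψ E hkE K').mp hψ')
              simpa using h2
          have h2 := h C (subset_refl C) 0 (enc k (.plus φ ψ)) hi1 hi2
          rw [supp_atom] at h2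
          simpa using h2
        · intro h D hD K p h1 h2
          rw [supp_atom]
          have hkD := hk.trans hD
          have c1 : Deriv D (K + {enc k φ}) p := by
            rcases bang_cases φ with ⟨α, rfl⟩ | hnbφ
            · have hGα : Good k α := by simpa [Good, maxAtom] using hGφ
              have IHα := ih α (by simp [deg] at hdφψ; omega) hGα
              rw [suppInf1_bang] at h1
              exact bang_extract (M := K) hkD IHα (fun E hE hα => by
                have h6 := h1 E hE hα
                rw [supp_atom] at h6
                exact h6)
            · have IHφ := ih φ (by omega) hGφ
              rw [suppInf1_nb hnbφ] at h1
              have h6 := h1 D (subset_refl D) {enc k φ}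
                ((IHφ D hkD _).mpr (Deriv.ref _))
              rw [supp_atom] at h6
              exact h6
          have c2 : Deriv D (K + {enc k ψ}) p := by
            rcases bang_cases ψ with ⟨β, rfl⟩ | hnbψ
            · have hGβ : Good k β := by simpa [Good, maxAtom] using hGψ
              have IHβ := ih β (by simp [deg] at hdφψ; omega) hGβ
              rw [suppInf1_bang] at h2
              exact bang_extract (M := K) hkD IHβ (fun E hE hβ => by
                have h6 := h2 E hE hβ
                rw [supp_atom] at h6
                exact h6)
            · have IHψ := ih ψ (by omega) hGψ
              rw [suppInf1_nb hnbψ] at h2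
              have h6 := h2 D (subset_refl D) {enc k ψ}
                ((IHψ D hkD _).mpr (Deriv.ref _))
              rw [supp_atom] at h6
              exact h6
          exact dapp2 (M₁ := L) (M₂ := K) (hkD (SimRule.pe φ ψ p))
            (fun s hs => by
              simp only [bx, Multiset.mem_singleton] at hs; subst hs
              simpa using h.mono hD)
            (fun s hs => by
              simp only [Multiset.insert_eq_cons, Multiset.mem_cons,
                Multiset.mem_singleton] at hs
              rcases hs with rfl | rfl
              · simpa using c1
              · simpa using c2)
    | bang α =>
        have hdα : deg α + 1 ≤ n + 1 := by simpa [deg] using hdeg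
        have hGα : Good k α := by simpa [Good, maxAtom] using hG
        have IHα := ih α (by omega) hGα
        rw [supp_bang]
        constructor
        · intro h
          have h2 := h C (subset_refl C) 0 (enc k (.bang α)) ?_
          · rw [supp_atom] at h2
            simpa using h2
          · intro D hD hα
            rw [supp_atom]
            exact derivPr (hk.trans hD) ((IHα D (hk.trans hD) 0).mp hα)
        · intro h D hD K p hyp
          rw [supp_atom]
          have hkD := hk.trans hD
          have h5 : Deriv D (K + {enc k (.bang α)}) p :=
            bang_extract hkD IHα (fun E hE hα => by
              have h6 := hyp E hE hα
              rw [supp_atom] at h6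
              exact h6)
          exact derivCut hkD (h.mono hD) h5

theorem maxAtom_unbang (χ : Fml) : maxAtom (unbang χ) = maxAtom χ := by
  cases χ <;> simp [unbang, maxAtom]

theorem sum_zero_snd : ∀ l : List Fml,
    ((l.map (fun δ => (δ, (0 : Multiset Atom)))).map Prod.snd).sum = 0 := by
  intro l
  induction l with
  | nil => rfl
  | cons a l ih => simpa using ih

theorem sum_enc_snd (k : ℕ) : ∀ l : List Fml,
    ((l.map (fun ψ => (ψ, ({enc k ψ} : Multiset Atom)))).map Prod.snd).sum
      = ↑(l.map (enc k)) := by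
  intro l
  induction l with
  | nil => rfl
  | cons a l ih =>
      simp only [List.map_cons, List.sum_cons, ih]
      rw [← Multiset.cons_coe, ← Multiset.singleton_add]

theorem completeness' (Γ : Multiset Fml) (φ : Fml) (h : Valid Γ φ) : NDeriv Γ φ := by
  classical
  set k := maxAtom φ + (Γ.map maxAtom).sum + 1 with hk
  have hGoodΓ : ∀ ψ ∈ Γ, Good k ψ := by
    intro ψ hψ
    have h1 : maxAtom ψ ∈ Γ.map maxAtom := Multiset.mem_map_of_mem _ hψ
    have h2 : maxAtom ψ ≤ (Γ.map maxAtom).sum :=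
      Multiset.single_le_sum (fun x _ => Nat.zero_le x) _ h1
    simp only [Good, hk]
    omega
  have hGoodφ : Good k φ := by simp only [Good, hk]; omega
  set E := Γ.filter (fun ψ => isBang ψ = true) with hE
  set NB := simBase k ∪ axBase k E with hNB
  have hsub : simBase k ⊆ NB := Set.subset_union_left
  have hEb : ∀ χ ∈ E, isBang χ = true := by
    intro χ hχ
    rw [hE] at hχ
    exact (Multiset.mem_filter.mp hχ).2
  have hEΓ : ∀ χ ∈ E, χ ∈ Γ := by
    intro χ hχ
    rw [hE] at hχ
    exact Multiset.mem_of_mem_filter hχ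
  -- the two SuppMS hypotheses
  have hMS1 : SuppMS NB 0 ((Γ.filter (fun ψ => isBang ψ = true)).map unbang) := by
    refine ⟨((Γ.filter (fun ψ => isBang ψ = true)).map unbang).toList.map
      (fun δ => (δ, 0)), ?_, ?_, ?_⟩
    · rw [List.map_map]
      have : (Prod.fst ∘ fun δ : Fml => (δ, (0 : Multiset Atom))) = id := rfl
      rw [this, List.map_id, Multiset.coe_toList]
    · exact sum_zero_snd _
    · intro x hx
      obtain ⟨δ, hδ, rfl⟩ := List.mem_map.mp hx
      have hδ' : δ ∈ (Γ.filter (fun ψ => isBang ψ = true)).map unbang :=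
        Multiset.mem_toList.mp hδ
      obtain ⟨χ, hχ, rfl⟩ := Multiset.mem_map.mp hδ'
      have hGoodδ : Good k (unbang χ) := by
        have := hGoodΓ χ (hEΓ χ hχ)
        simpa [Good, maxAtom_unbang] using this
      have hder : Deriv NB 0 (enc k (unbang χ)) :=
        dapp0 (Set.mem_union_right _ ⟨χ, hχ, rfl⟩)
      exact (flatten (deg (unbang χ)) (unbang χ) (le_refl _) hGoodδ NB hsub 0).mpr hder
  have hMS2 : SuppMS NB ((Γ.filter (fun ψ => isBang ψ = false)).map (enc k))
      (Γ.filter (fun ψ => isBang ψ = false)) := by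
    refine ⟨(Γ.filter (fun ψ => isBang ψ = false)).toList.map
      (fun ψ => (ψ, ({enc k ψ} : Multiset Atom))), ?_, ?_, ?_⟩
    · rw [List.map_map]
      have : (Prod.fst ∘ fun ψ : Fml => (ψ, ({enc k ψ} : Multiset Atom))) = id := rfl
      rw [this, List.map_id, Multiset.coe_toList]
    · rw [sum_enc_snd]
      conv_rhs => rw [← Multiset.coe_toList (Γ.filter (fun ψ => isBang ψ = false))]
      rw [Multiset.map_coe]
    · intro x hx
      obtain ⟨ψ, hψ, rfl⟩ := List.mem_map.mp hx
      have hψ' : ψ ∈ Γ.filter (fun ψ => isBang ψ = false) := Multiset.mem_toList.mp hψ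
      have hψΓ : ψ ∈ Γ := Multiset.mem_of_mem_filter hψ'
      exact (flatten (deg ψ) ψ (le_refl _) (hGoodΓ ψ hψΓ) NB hsub _).mpr (Deriv.ref _)
  have hss := h NB NB (subset_refl NB)
    ((Γ.filter (fun ψ => isBang ψ = false)).map (enc k)) hMS1 hMS2
  -- hss : Supp NB (0 + K) φ
  have hder : Deriv NB (0 + (Γ.filter (fun ψ => isBang ψ = false)).map (enc k))
      (enc k φ) :=
    (flatten (deg φ) φ (le_refl _) hGoodφ NB hsub _).mp hss
  have hnd := sound hEb hder
  -- hnd : NDeriv (map (dec k) (0 + K) + E) φ', φ' = dec k (enc k φ)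
  rw [dec_enc] at hnd
  have hctx : Multiset.map (dec k)
      (0 + (Γ.filter (fun ψ => isBang ψ = false)).map (enc k)) + E = Γ := by
    rw [zero_add, Multiset.map_map]
    have h1 : Multiset.map (dec k ∘ enc k) (Multiset.filter (fun ψ => isBang ψ = false) Γ)
        = Multiset.map id (Multiset.filter (fun ψ => isBang ψ = false) Γ) :=
      Multiset.map_congr rfl (fun ψ _ => dec_enc k ψ)
    rw [h1, Multiset.map_id, hE]
    have h2 : Γ.filter (fun ψ => isBang ψ = false)
        = Γ.filter (fun ψ => ¬(isBang ψ = true)) := by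
      apply Multiset.filter_congr
      intro ψ _
      simp
    rw [h2]
    rw [add_comm]
    exact Multiset.filter_add_not _ Γ
  rw [hctx] at hnd
  exact hnd

theorem completeness (Γ : Multiset Fml) (φ : Fml) (h : Valid Γ φ) : NDeriv Γ φ :=
  completeness' Γ φ h
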